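/- arXiv:math/0010071 — 5 statements merged into one kernel-verified Lean document; each statement's English description precedes it below -/
import Mathlib

section
/- Let n ≥ 1 be an integer and let f : ℝⁿ → ℝ be a continuously differentiable function with compact support. Then for every x ∈ ℝⁿ, |f(x)| ≤ (1/νₙ) · ∫_{ℝⁿ} |∇f(y)| / |x − y|^{n−1} dy, where νₙ = n · (Lebesgue measure of the unit ball in ℝⁿ) is the (n−1)-dimensional volume of the unit sphere in ℝⁿ, and the integral is with respect to Lebesgue measure on ℝⁿ. -/
open MeasureTheory Metric
open Set
open scoped ENNReal

variable {n : ℕ}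

lemma grad_eq (f : EuclideanSpace ℝ (Fin n) → ℝ) (y : EuclideanSpace ℝ (Fin n)) :
    gradient f y = (InnerProductSpace.toDual ℝ _).symm (fderiv ℝ f y) := rfl

lemma grad_cont (f : EuclideanSpace ℝ (Fin n) → ℝ) (hf : ContDiff ℝ 1 f) :
    Continuous (gradient f) :=
  (InnerProductSpace.toDual ℝ _).symm.continuous.comp (hf.continuous_fderiv one_ne_zero)

lemma grad_norm (f : EuclideanSpace ℝ (Fin n) → ℝ) (y : EuclideanSpace ℝ (Fin n)) :
    ‖gradient f y‖ = ‖fderiv ℝ f y‖ :=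
  (InnerProductSpace.toDual ℝ _).symm.norm_map _

lemma grad_zero_of_nmem (f : EuclideanSpace ℝ (Fin n) → ℝ) {y : EuclideanSpace ℝ (Fin n)}
    (hy : y ∉ tsupport f) : gradient f y = 0 := by
  rw [grad_eq]
  have : fderiv ℝ f y = 0 := by
    by_contra h
    exact hy (support_fderiv_subset ℝ (Function.mem_support.2 h))
  rw [this, map_zero]

lemma ray_zero (f : EuclideanSpace ℝ (Fin n) → ℝ) {R : ℝ}
    (hR : tsupport f ⊆ closedBall 0 R) (x v : EuclideanSpace ℝ (Fin n)) (hv : ‖v‖ = 1)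
    {t : ℝ} (ht : R + ‖x‖ < |t|) : gradient f (x + t • v) = 0 := by
  apply grad_zero_of_nmem
  intro hmem
  have := mem_closedBall_zero_iff.1 (hR hmem)
  have h2 : |t| - ‖x‖ ≤ ‖x + t • v‖ := by
    have h := norm_sub_le (x + t • v) x
    have h2 : x + t • v - x = t • v := by abel
    rw [h2, norm_smul, hv, mul_one, Real.norm_eq_abs] at h
    linarith
  linarith

lemma ray_hcs (f : EuclideanSpace ℝ (Fin n) → ℝ) {R : ℝ}
    (hR : tsupport f ⊆ closedBall 0 R) (x v : EuclideanSpace ℝ (Fin n)) (hv : ‖v‖ = 1) :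
    HasCompactSupport (fun t : ℝ => ‖gradient f (x + t • v)‖) := by
  apply HasCompactSupport.intro (isCompact_Icc (a := -(R + ‖x‖ + 1)) (b := R + ‖x‖ + 1))
  intro t ht
  have : R + ‖x‖ < |t| := by
    rcases abs_cases t with ⟨h, _⟩ | ⟨h, _⟩ <;> simp only [mem_Icc, not_and_or, not_le] at ht <;> rcases ht with h1 | h1 <;> linarith
  simp [ray_zero f hR x v hv this]

lemma ray_integrable (f : EuclideanSpace ℝ (Fin n) → ℝ) (hf : ContDiff ℝ 1 f) {R : ℝ}
    (hR : tsupport f ⊆ closedBall 0 R) (x v : EuclideanSpace ℝ (Fin n)) (hv : ‖v‖ = 1) :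
    IntegrableOn (fun t : ℝ => ‖gradient f (x + t • v)‖) (Ioi 0) := by
  have hc : Continuous (fun t : ℝ => ‖gradient f (x + t • v)‖) := by
    exact continuous_norm.comp ((grad_cont f hf).comp (continuous_const.add
      (continuous_id.smul continuous_const)))
  exact (hc.integrable_of_hasCompactSupport (ray_hcs f hR x v hv)).integrableOn

lemma ray_bound (f : EuclideanSpace ℝ (Fin n) → ℝ) (hf : ContDiff ℝ 1 f) {R : ℝ}
    (hR0 : 0 ≤ R) (hR : tsupport f ⊆ closedBall 0 R) (x v : EuclideanSpace ℝ (Fin n))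
    (hv : ‖v‖ = 1) :
    |f x| ≤ ∫ t in Ioi (0:ℝ), ‖gradient f (x + t • v)‖ := by
  set T : ℝ := R + ‖x‖ + 1 with hT
  have hT0 : 0 ≤ T := by positivity
  have hfd : Differentiable ℝ f := hf.differentiable one_ne_zero
  have hder : ∀ t : ℝ, HasDerivAt (fun s : ℝ => f (x + s • v)) ((fderiv ℝ f (x + t • v)) v) t := by
    intro t
    have h1 : HasDerivAt (fun s : ℝ => x + s • v) v t := by
      simpa using ((hasDerivAt_id t).smul_const v).const_add x
    exact (hfd (x + t • v)).hasFDerivAt.comp_hasDerivAt t h1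
  have hcont : Continuous (fun t : ℝ => (fderiv ℝ f (x + t • v)) v) := by
    exact ((hf.continuous_fderiv one_ne_zero).comp
      (continuous_const.add (continuous_id.smul continuous_const))).clm_apply continuous_const
  have hkey : ∫ t in (0:ℝ)..T, (fderiv ℝ f (x + t • v)) v = f (x + T • v) - f (x + (0:ℝ) • v) :=
    intervalIntegral.integral_eq_sub_of_hasDerivAt (fun t _ => hder t)
      (hcont.intervalIntegrable _ _)
  have hTzero : f (x + T • v) = 0 := by
    apply image_eq_zero_of_notMem_tsupport
    intro hmem
    have h1 := mem_closedBall_zero_iff.1 (hR hmem)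
    have h := norm_sub_le (x + T • v) x
    have h2 : x + T • v - x = T • v := by abel
    rw [h2, norm_smul, hv, mul_one, Real.norm_eq_abs, abs_of_nonneg hT0] at h
    linarith
  have hfx : f (x + (0:ℝ) • v) = f x := by simp
  have habs : |f x| = |∫ t in (0:ℝ)..T, (fderiv ℝ f (x + t • v)) v| := by
    rw [hkey, hTzero, hfx, zero_sub, abs_neg]
  rw [habs]
  calc |∫ t in (0:ℝ)..T, (fderiv ℝ f (x + t • v)) v|
      ≤ ∫ t in (0:ℝ)..T, ‖gradient f (x + t • v)‖ := by
        refine (intervalIntegral.abs_integral_le_integral_abs hT0).trans ?_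
        apply intervalIntegral.integral_mono_on hT0 (hcont.abs.intervalIntegrable _ _)
          ((continuous_norm.comp ((grad_cont f hf).comp (continuous_const.add
            (continuous_id.smul continuous_const)))).intervalIntegrable _ _)
        intro t _
        have := ((fderiv ℝ f (x + t • v)).le_opNorm v)
        rw [hv, mul_one] at this
        show |(fderiv ℝ f (x + t • v)) v| ≤ ‖gradient f (x + t • v)‖
        rw [grad_norm]
        simpa using this
    _ ≤ ∫ t in Ioi (0:ℝ), ‖gradient f (x + t • v)‖ := by
        rw [intervalIntegral.integral_of_le hT0]
        apply setIntegral_mono_set (ray_integrable f hf hR x v hv)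
          (ae_of_all _ fun t => norm_nonneg _)
        exact HasSubset.Subset.eventuallyLE Ioc_subset_Ioi_self

/-- Pointwise bound of a compactly supported `C¹` function by the Riesz potential
of its gradient. -/
theorem stmt_2 (n : ℕ) (hn : 1 ≤ n)
    (f : EuclideanSpace ℝ (Fin n) → ℝ)
    (hf : ContDiff ℝ 1 f) (hsupp : HasCompactSupport f)
    (x : EuclideanSpace ℝ (Fin n)) :
    |f x| ≤ (1 / (n * (volume (ball (0 : EuclideanSpace ℝ (Fin n)) 1)).toReal)) *
      ∫ y, ‖gradient f y‖ / dist x y ^ (n - 1) := by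
  haveI : Nontrivial (EuclideanSpace ℝ (Fin n)) := by
    apply Module.nontrivial_of_finrank_pos (R := ℝ)
    rw [finrank_euclideanSpace_fin]
    exact hn
  -- support radius
  obtain ⟨R₀, hR₀⟩ := hsupp.isBounded.subset_closedBall 0
  set R : ℝ := max R₀ 0 with hRdef
  have hR0 : 0 ≤ R := le_max_right _ _
  have hR : tsupport f ⊆ closedBall 0 R :=
    hR₀.trans (closedBall_subset_closedBall (le_max_left _ _))
  -- gradient bound
  have hgc : Continuous (gradient f) := grad_cont f hf
  have hgsupp : HasCompactSupport (gradient f) := by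
    have h1 : HasCompactSupport (fderiv ℝ f) := hsupp.fderiv ℝ
    exact h1.comp_left (g := (InnerProductSpace.toDual ℝ _).symm) (map_zero _)
  obtain ⟨M, hM⟩ := hgc.bounded_above_of_compact_support hgsupp
  have hM' : ∀ y, ‖gradient f y‖ ≤ M := hM
  have hM0 : 0 ≤ M := (norm_nonneg _).trans (hM' x)
  set T : ℝ := R + ‖x‖ + 1 with hTdef
  have hT0 : 0 ≤ T := by positivity
  have hdim : Module.finrank ℝ (EuclideanSpace ℝ (Fin n)) = n := finrank_euclideanSpace_fin
  set F : EuclideanSpace ℝ (Fin n) → ℝ := fun y => ‖gradient f y‖ / dist x y ^ (n - 1) with hFdef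
  have hF0 : ∀ y, 0 ≤ F y := fun y => div_nonneg (norm_nonneg _) (pow_nonneg dist_nonneg _)
  have hFm : Measurable F := by
    exact (hgc.norm.measurable).div ((continuous_const.dist continuous_id).pow (n-1)).measurable
  set σ : Measure (sphere (0 : EuclideanSpace ℝ (Fin n)) 1) :=
    (volume : Measure (EuclideanSpace ℝ (Fin n))).toSphere with hσdef
  set inr : sphere (0 : EuclideanSpace ℝ (Fin n)) 1 → ℝ≥0∞ :=
    fun v => ∫⁻ t in Ioi (0:ℝ), ENNReal.ofReal ‖gradient f (x + t • (v : EuclideanSpace ℝ (Fin n)))‖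
    with hinrdef
  set P : sphere (0 : EuclideanSpace ℝ (Fin n)) 1 × Ioi (0:ℝ) → ℝ≥0∞ :=
    fun p => ENNReal.ofReal
      (‖gradient f (x + (p.2 : ℝ) • (p.1 : EuclideanSpace ℝ (Fin n)))‖ / (p.2 : ℝ) ^ (n - 1))
    with hPdef
  have hPmeas : Measurable P := by
    apply ENNReal.measurable_ofReal.comp
    apply Measurable.div
    · exact (continuous_norm.comp (hgc.comp (continuous_const.add
        ((continuous_subtype_val.comp continuous_snd).smul
          (continuous_subtype_val.comp continuous_fst))))).measurable
    · exact ((continuous_subtype_val.comp continuous_snd).pow (n-1)).measurable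
  have hmp := (volume : Measure (EuclideanSpace ℝ (Fin n))).measurePreserving_homeomorphUnitSphereProd
  rw [hdim] at hmp
  -- inner radial integral computation
  have hinner : ∀ v : sphere (0 : EuclideanSpace ℝ (Fin n)) 1,
      ∫⁻ t, P (v, t) ∂(Measure.volumeIoiPow (n-1)) = inr v := by
    intro v
    have hd : Measurable fun r : Ioi (0:ℝ) => ENNReal.ofReal ((r:ℝ) ^ (n-1)) :=
      ENNReal.measurable_ofReal.comp (measurable_subtype_coe.pow_const _)
    have hg : Measurable fun t : Ioi (0:ℝ) => P (v, t) := hPmeas.comp measurable_prodMk_left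
    rw [Measure.volumeIoiPow, lintegral_withDensity_eq_lintegral_mul _ hd hg]
    have step := lintegral_subtype_comap (μ := (volume : Measure ℝ))
      (measurableSet_Ioi (a := (0:ℝ)))
      (fun t : ℝ => ENNReal.ofReal (t ^ (n-1)) *
        ENNReal.ofReal (‖gradient f (x + t • (v : EuclideanSpace ℝ (Fin n)))‖ / t ^ (n - 1)))
    simp only [Pi.mul_apply, hPdef]
    rw [step]
    refine setLIntegral_congr_fun measurableSet_Ioi (fun t ht => ?_)
    have h1 : (0:ℝ) < t ^ (n-1) := pow_pos ht _
    rw [← ENNReal.ofReal_mul h1.le, mul_comm (t ^ (n-1)), div_mul_cancel₀ _ h1.ne']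
  -- the key polar coordinates identity
  have key : ∫⁻ y, ENNReal.ofReal (F y) = ∫⁻ v, inr v ∂σ := by
    calc ∫⁻ y, ENNReal.ofReal (F y)
        = ∫⁻ z, ENNReal.ofReal
            (‖gradient f (x + z)‖ / ‖z‖ ^ (n - 1)) := by
          rw [← lintegral_add_left_eq_self (fun y => ENNReal.ofReal (F y)) x]
          exact lintegral_congr fun z => by rw [hFdef]; simp only; rw [dist_self_add_right]
      _ = ∫⁻ z in {(0 : EuclideanSpace ℝ (Fin n))}ᶜ, ENNReal.ofReal
            (‖gradient f (x + z)‖ / ‖z‖ ^ (n - 1)) := by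
          rw [restrict_compl_singleton]
      _ = ∫⁻ z : ({(0 : EuclideanSpace ℝ (Fin n))}ᶜ : Set (EuclideanSpace ℝ (Fin n))),
            ENNReal.ofReal (‖gradient f (x + (z : EuclideanSpace ℝ (Fin n)))‖ /
              ‖(z : EuclideanSpace ℝ (Fin n))‖ ^ (n - 1)) ∂(volume.comap Subtype.val) :=
          (lintegral_subtype_comap (measurableSet_singleton _).compl _).symm
      _ = ∫⁻ p, P p ∂(σ.prod (Measure.volumeIoiPow (n-1))) := by
          rw [← hmp.lintegral_comp hPmeas]
          refine lintegral_congr fun z => ?_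
          have hz : (z : EuclideanSpace ℝ (Fin n)) ≠ 0 := z.2
          simp only [hPdef, homeomorphUnitSphereProd_apply_fst_coe,
            homeomorphUnitSphereProd_apply_snd_coe]
          rw [smul_inv_smul₀ (norm_ne_zero_iff.2 hz)]
      _ = ∫⁻ v, ∫⁻ t, P (v, t) ∂(Measure.volumeIoiPow (n-1)) ∂σ :=
          lintegral_prod _ hPmeas.aemeasurable
      _ = ∫⁻ v, inr v ∂σ := lintegral_congr hinner
  -- bounds on inner integral
  have hlow : ∀ v : sphere (0 : EuclideanSpace ℝ (Fin n)) 1,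
      ENNReal.ofReal |f x| ≤ inr v := by
    intro v
    have hv : ‖(v : EuclideanSpace ℝ (Fin n))‖ = 1 := mem_sphere_zero_iff_norm.1 v.2
    calc ENNReal.ofReal |f x|
        ≤ ENNReal.ofReal (∫ t in Ioi (0:ℝ),
            ‖gradient f (x + t • (v : EuclideanSpace ℝ (Fin n)))‖) :=
          ENNReal.ofReal_le_ofReal (ray_bound f hf hR0 hR x v hv)
      _ = inr v := ofReal_integral_eq_lintegral_ofReal (ray_integrable f hf hR x v hv)
          (ae_of_all _ fun t => norm_nonneg _)
  have hup : ∀ v : sphere (0 : EuclideanSpace ℝ (Fin n)) 1,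
      inr v ≤ ENNReal.ofReal (M * T) := by
    intro v
    have hv : ‖(v : EuclideanSpace ℝ (Fin n))‖ = 1 := mem_sphere_zero_iff_norm.1 v.2
    have hreal : ∫ t in Ioi (0:ℝ), ‖gradient f (x + t • (v : EuclideanSpace ℝ (Fin n)))‖ ≤ M * T := by
      have hle : ∀ t ∈ Ioi (0:ℝ), ‖gradient f (x + t • (v : EuclideanSpace ℝ (Fin n)))‖ ≤
          (Ioc (0:ℝ) T).indicator (fun _ => M) t := by
        intro t ht
        by_cases h : t ≤ T
        · rw [indicator_of_mem (show t ∈ Ioc (0:ℝ) T from ⟨ht, h⟩)]; exact hM' _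
        · push_neg at h
          rw [indicator_of_notMem (fun hc => absurd hc.2 (not_le.2 h))]
          have : R + ‖x‖ < |t| := by
            rw [abs_of_pos ht]; rw [hTdef] at h; linarith
          rw [ray_zero f hR x v hv this, norm_zero]
      calc ∫ t in Ioi (0:ℝ), ‖gradient f (x + t • (v : EuclideanSpace ℝ (Fin n)))‖
          ≤ ∫ t in Ioi (0:ℝ), (Ioc (0:ℝ) T).indicator (fun _ => M) t :=
            setIntegral_mono_on (ray_integrable f hf hR x v hv)
              ((integrable_indicator_iff measurableSet_Ioc).2 (integrableOn_const
                (by rw [Real.volume_Ioc]; exact ENNReal.ofReal_ne_top))).integrableOn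
              measurableSet_Ioi hle
        _ = M * T := by
            rw [setIntegral_indicator measurableSet_Ioc,
              inter_eq_self_of_subset_right Ioc_subset_Ioi_self, setIntegral_const, measureReal_def,
              Real.volume_Ioc, smul_eq_mul, sub_zero, ENNReal.toReal_ofReal hT0, mul_comm]
    calc inr v = ENNReal.ofReal (∫ t in Ioi (0:ℝ),
            ‖gradient f (x + t • (v : EuclideanSpace ℝ (Fin n)))‖) :=
          (ofReal_integral_eq_lintegral_ofReal (ray_integrable f hf hR x v hv)
            (ae_of_all _ fun t => norm_nonneg _)).symm
      _ ≤ ENNReal.ofReal (M * T) := ENNReal.ofReal_le_ofReal hreal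
  -- measure of the sphere
  have hσuniv : σ univ = (n : ℝ≥0∞) * volume (ball (0 : EuclideanSpace ℝ (Fin n)) 1) := by
    rw [hσdef, Measure.toSphere_apply_univ, hdim]
  have hσfin : σ univ ≠ ⊤ := measure_ne_top σ univ
  -- finiteness
  have hupper : ∫⁻ y, ENNReal.ofReal (F y) ≤ ENNReal.ofReal (M * T) * σ univ := by
    rw [key]
    calc ∫⁻ v, inr v ∂σ ≤ ∫⁻ _, ENNReal.ofReal (M * T) ∂σ := lintegral_mono hup
      _ = ENNReal.ofReal (M * T) * σ univ := lintegral_const _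
  have hfin : ∫⁻ y, ENNReal.ofReal (F y) ≠ ⊤ :=
    (hupper.trans_lt (ENNReal.mul_lt_top ENNReal.ofReal_lt_top hσfin.lt_top)).ne
  have hlower : ENNReal.ofReal |f x| * σ univ ≤ ∫⁻ y, ENNReal.ofReal (F y) := by
    rw [key]
    calc ENNReal.ofReal |f x| * σ univ = ∫⁻ _, ENNReal.ofReal |f x| ∂σ := (lintegral_const _).symm
      _ ≤ ∫⁻ v, inr v ∂σ := lintegral_mono hlow
  have hIeq : ∫ y, F y = (∫⁻ y, ENNReal.ofReal (F y)).toReal :=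
    integral_eq_lintegral_of_nonneg_ae (ae_of_all _ hF0) hFm.aestronglyMeasurable
  have hreal2 : |f x| * ((n : ℝ) * (volume (ball (0 : EuclideanSpace ℝ (Fin n)) 1)).toReal)
      ≤ ∫ y, F y := by
    have h1 := ENNReal.toReal_mono hfin hlower
    rw [hσuniv, ← mul_assoc, ENNReal.toReal_mul, ENNReal.toReal_mul,
      ENNReal.toReal_ofReal (abs_nonneg _), ENNReal.toReal_natCast] at h1
    rw [hIeq]
    calc |f x| * ((n : ℝ) * (volume (ball (0 : EuclideanSpace ℝ (Fin n)) 1)).toReal)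
        = |f x| * (n : ℝ) * (volume (ball (0 : EuclideanSpace ℝ (Fin n)) 1)).toReal := by ring
      _ ≤ _ := h1
  have hc : (0:ℝ) < (n : ℝ) * (volume (ball (0 : EuclideanSpace ℝ (Fin n)) 1)).toReal := by
    apply mul_pos
    · exact_mod_cast hn
    · exact ENNReal.toReal_pos (measure_ball_pos volume 0 one_pos).ne' measure_ball_lt_top.ne
  rw [one_div_mul_eq_div, le_div_iff₀ hc]
  exact hreal2
end

section
/- Let h : ℝ² → ℝ be a smooth function with compact support, write ∂₁, ∂₂ for the partial derivatives with respect to the two standard coordinates, and let Δh = ∂₁²h + ∂₂²h be the Laplacian of h. Then ∫_{ℝ²} (Δh(x))² dx − 2 ∫_{ℝ²} (∂₁∂₂h(x))² dx = ∫_{ℝ²} (∂₁²h(x))² + (∂₂²h(x))² dx; in particular, 2 ∫_{ℝ²} (∂₁∂₂h(x))² dx ≤ ∫_{ℝ²} (Δh(x))² dx. -/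
open MeasureTheory

/-- The partial derivative of `h : ℝ² → ℝ` in the `i`-th coordinate direction. -/
noncomputable def pd (i : Fin 2) (h : EuclideanSpace ℝ (Fin 2) → ℝ)
    (x : EuclideanSpace ℝ (Fin 2)) : ℝ :=
  fderiv ℝ h x (EuclideanSpace.single i 1)

lemma pd_contDiff (i : Fin 2) {h : EuclideanSpace ℝ (Fin 2) → ℝ}
    (hh : ContDiff ℝ ((⊤ : ℕ∞) : WithTop ℕ∞) h) :
    ContDiff ℝ ((⊤ : ℕ∞) : WithTop ℕ∞) (pd i h) := by
  have : ContDiff ℝ ((⊤ : ℕ∞) : WithTop ℕ∞) (fderiv ℝ h) :=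
    hh.fderiv_right (by exact_mod_cast le_top)
  exact this.clm_apply contDiff_const

lemma pd_diff {h : EuclideanSpace ℝ (Fin 2) → ℝ}
    (hh : ContDiff ℝ ((⊤ : ℕ∞) : WithTop ℕ∞) h) : Differentiable ℝ h :=
  hh.differentiable (by simp)

lemma pd_supp (i : Fin 2) {h : EuclideanSpace ℝ (Fin 2) → ℝ}
    (hs : HasCompactSupport h) : HasCompactSupport (pd i h) := by
  have : pd i h = (fun L : EuclideanSpace ℝ (Fin 2) →L[ℝ] ℝ =>
      L (EuclideanSpace.single i 1)) ∘ fderiv ℝ h := rfl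
  rw [this]
  exact (hs.fderiv ℝ).comp_left rfl

lemma pd_pd (i j : Fin 2) {h : EuclideanSpace ℝ (Fin 2) → ℝ}
    (hh : ContDiff ℝ ((⊤ : ℕ∞) : WithTop ℕ∞) h) (x : EuclideanSpace ℝ (Fin 2)) :
    pd i (pd j h) x = fderiv ℝ (fderiv ℝ h) x (EuclideanSpace.single i 1)
      (EuclideanSpace.single j 1) := by
  have hc : ContDiff ℝ ((⊤ : ℕ∞) : WithTop ℕ∞) (fderiv ℝ h) :=
    hh.fderiv_right (by exact_mod_cast le_top)
  have hd : DifferentiableAt ℝ (fderiv ℝ h) x := (hc.differentiable (by norm_cast)).differentiableAt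
  have : pd j h = fun y => (fderiv ℝ h y) (EuclideanSpace.single j 1) := rfl
  rw [show pd i (pd j h) x = fderiv ℝ (pd j h) x (EuclideanSpace.single i 1) from rfl, this,
    fderiv_clm_apply hd (differentiableAt_const _)]
  simp

lemma pd_comm (i j : Fin 2) {h : EuclideanSpace ℝ (Fin 2) → ℝ}
    (hh : ContDiff ℝ ((⊤ : ℕ∞) : WithTop ℕ∞) h) :
    pd i (pd j h) = pd j (pd i h) := by
  ext x
  rw [pd_pd i j hh, pd_pd j i hh]
  exact (hh.contDiffAt.isSymmSndFDerivAt (by rw [minSmoothness_of_isRCLikeNormedField]; norm_cast)) _ _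

/-- For smooth compactly supported `h` on `ℝ²`,
`∫ (Δh)² − 2 ∫ (∂₁∂₂h)² = ∫ (∂₁²h)² + (∂₂²h)²`, and in particular
`2 ∫ (∂₁∂₂h)² ≤ ∫ (Δh)²`. -/
theorem stmt_4 (h : EuclideanSpace ℝ (Fin 2) → ℝ)
    (hsm : ContDiff ℝ ((⊤ : ℕ∞) : WithTop ℕ∞) h) (hsupp : HasCompactSupport h) :
    ((∫ x, (pd 0 (pd 0 h) x + pd 1 (pd 1 h) x) ^ 2) -
        2 * ∫ x, (pd 0 (pd 1 h) x) ^ 2 =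
      ∫ x, ((pd 0 (pd 0 h) x) ^ 2 + (pd 1 (pd 1 h) x) ^ 2)) ∧
    2 * (∫ x, (pd 0 (pd 1 h) x) ^ 2) ≤
      ∫ x, (pd 0 (pd 0 h) x + pd 1 (pd 1 h) x) ^ 2 := by
  have hint : ∀ (f g : EuclideanSpace ℝ (Fin 2) → ℝ),
      ContDiff ℝ ((⊤ : ℕ∞) : WithTop ℕ∞) f → HasCompactSupport f →
      ContDiff ℝ ((⊤ : ℕ∞) : WithTop ℕ∞) g →
      Integrable (fun x => f x * g x) := fun f g hf hfs hg =>
    (hf.continuous.mul hg.continuous).integrable_of_hasCompactSupport hfs.mul_right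
  -- key identity: ∫ ∂₁²h ∂₂²h = ∫ (∂₁∂₂h)²
  have key : (∫ x, pd 0 (pd 0 h) x * pd 1 (pd 1 h) x) = ∫ x, pd 0 (pd 1 h) x ^ 2 := by
    have step1 : (∫ x, pd 0 (pd 0 h) x * pd 1 (pd 1 h) x) =
        - ∫ x, pd 1 (pd 0 (pd 0 h)) x * pd 1 h x :=
      integral_mul_fderiv_eq_neg_fderiv_mul_of_integrable
        (hint _ _ (pd_contDiff 1 (pd_contDiff 0 (pd_contDiff 0 hsm)))
          (pd_supp 1 (pd_supp 0 (pd_supp 0 hsupp))) (pd_contDiff 1 hsm))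
        (hint _ _ (pd_contDiff 0 (pd_contDiff 0 hsm))
          (pd_supp 0 (pd_supp 0 hsupp)) (pd_contDiff 1 (pd_contDiff 1 hsm)))
        (hint _ _ (pd_contDiff 0 (pd_contDiff 0 hsm))
          (pd_supp 0 (pd_supp 0 hsupp)) (pd_contDiff 1 hsm))
        (fun x _ => pd_diff (pd_contDiff 0 (pd_contDiff 0 hsm)) x)
        (fun x _ => pd_diff (pd_contDiff 1 hsm) x)
    have step2 : (∫ x, pd 1 h x * pd 0 (pd 0 (pd 1 h)) x) =
        - ∫ x, pd 0 (pd 1 h) x * pd 0 (pd 1 h) x :=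
      integral_mul_fderiv_eq_neg_fderiv_mul_of_integrable
        (hint _ _ (pd_contDiff 0 (pd_contDiff 1 hsm))
          (pd_supp 0 (pd_supp 1 hsupp)) (pd_contDiff 0 (pd_contDiff 1 hsm)))
        (hint _ _ (pd_contDiff 1 hsm) (pd_supp 1 hsupp)
          (pd_contDiff 0 (pd_contDiff 0 (pd_contDiff 1 hsm))))
        (hint _ _ (pd_contDiff 1 hsm) (pd_supp 1 hsupp)
          (pd_contDiff 0 (pd_contDiff 1 hsm)))
        (fun x _ => pd_diff (pd_contDiff 1 hsm) x)
        (fun x _ => pd_diff (pd_contDiff 0 (pd_contDiff 1 hsm)) x)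
    calc (∫ x, pd 0 (pd 0 h) x * pd 1 (pd 1 h) x)
        = - ∫ x, pd 1 (pd 0 (pd 0 h)) x * pd 1 h x := step1
      _ = - ∫ x, pd 0 (pd 0 (pd 1 h)) x * pd 1 h x := by
          rw [pd_comm 1 0 (pd_contDiff 0 hsm), pd_comm 1 0 hsm]
      _ = - ∫ x, pd 1 h x * pd 0 (pd 0 (pd 1 h)) x := by
          congr 1; apply integral_congr_ae
          filter_upwards with x using mul_comm _ _
      _ = ∫ x, pd 0 (pd 1 h) x * pd 0 (pd 1 h) x := by rw [step2, neg_neg]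
      _ = ∫ x, pd 0 (pd 1 h) x ^ 2 := by
          apply integral_congr_ae; filter_upwards with x using (sq _).symm
  have hia : Integrable (fun x => pd 0 (pd 0 h) x ^ 2) := by
    simpa [sq] using hint _ _ (pd_contDiff 0 (pd_contDiff 0 hsm))
      (pd_supp 0 (pd_supp 0 hsupp)) (pd_contDiff 0 (pd_contDiff 0 hsm))
  have hib : Integrable (fun x => pd 1 (pd 1 h) x ^ 2) := by
    simpa [sq] using hint _ _ (pd_contDiff 1 (pd_contDiff 1 hsm))
      (pd_supp 1 (pd_supp 1 hsupp)) (pd_contDiff 1 (pd_contDiff 1 hsm))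
  have hiab : Integrable (fun x => pd 0 (pd 0 h) x * pd 1 (pd 1 h) x) :=
    hint _ _ (pd_contDiff 0 (pd_contDiff 0 hsm)) (pd_supp 0 (pd_supp 0 hsupp))
      (pd_contDiff 1 (pd_contDiff 1 hsm))
  have h12 : Integrable (fun x => pd 0 (pd 0 h) x ^ 2 + pd 1 (pd 1 h) x ^ 2) := hia.add hib
  have expand : (∫ x, (pd 0 (pd 0 h) x + pd 1 (pd 1 h) x) ^ 2) =
      (∫ x, (pd 0 (pd 0 h) x ^ 2 + pd 1 (pd 1 h) x ^ 2)) + 2 * ∫ x, pd 0 (pd 1 h) x ^ 2 := by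
    have e : (∫ x, (pd 0 (pd 0 h) x + pd 1 (pd 1 h) x) ^ 2) =
        ∫ x, ((pd 0 (pd 0 h) x ^ 2 + pd 1 (pd 1 h) x ^ 2) +
          2 * (pd 0 (pd 0 h) x * pd 1 (pd 1 h) x)) := by
      congr 1; funext x; ring
    rw [e, integral_add h12 (hiab.const_mul 2), integral_const_mul, key]
  have hnn : (0 : ℝ) ≤ ∫ x, (pd 0 (pd 0 h) x ^ 2 + pd 1 (pd 1 h) x ^ 2) :=
    integral_nonneg fun x => by positivity
  constructor
  · rw [expand]; ring
  · rw [expand]; linarith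
end

section
/- There does NOT exist a constant C ≥ 0 such that for every smooth function h : ℝ² → ℝ with compact support one has sup_{x ∈ ℝ²} |∂₁∂₂h(x)| ≤ C · sup_{x ∈ ℝ²} |Δh(x)|. That is, the supremum of |∂₁∂₂h| is not uniformly controlled by the supremum of |Δh| over all smooth compactly supported functions h on ℝ². -/
open MeasureTheory
open scoped ContDiff

noncomputable def mkL (c₁ c₂ : ℝ) : ℝ × ℝ →L[ℝ] ℝ :=
  c₁ • ContinuousLinearMap.fst ℝ ℝ ℝ + c₂ • ContinuousLinearMap.snd ℝ ℝ ℝ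

lemma mkL_apply (c₁ c₂ : ℝ) (v : ℝ × ℝ) : mkL c₁ c₂ v = c₁ * v.1 + c₂ * v.2 := by
  simp [mkL, smul_eq_mul]

noncomputable def π2 : EuclideanSpace ℝ (Fin 2) →L[ℝ] ℝ × ℝ :=
  (EuclideanSpace.proj (0 : Fin 2)).prod (EuclideanSpace.proj (1 : Fin 2))

lemma π2_apply (x : EuclideanSpace ℝ (Fin 2)) : π2 x = (x 0, x 1) := rfl

lemma pd_bridge (f f₁ f₂ : ℝ × ℝ → ℝ)
    (hf : ∀ p, HasFDerivAt f (mkL (f₁ p) (f₂ p)) p) :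
    (pd 0 (fun x => f (π2 x)) = fun x => f₁ (π2 x)) ∧
    (pd 1 (fun x => f (π2 x)) = fun x => f₂ (π2 x)) := by
  have key : ∀ x, HasFDerivAt (fun x => f (π2 x))
      ((mkL (f₁ (π2 x)) (f₂ (π2 x))).comp π2) x :=
    fun x => (hf (π2 x)).comp x π2.hasFDerivAt
  constructor <;> funext x <;> unfold pd <;> rw [(key x).fderiv] <;>
    simp [mkL, π2, EuclideanSpace.single_apply]


noncomputable section
variable (ε : ℝ)

def S (p : ℝ × ℝ) : ℝ := p.1 ^ 2 + p.2 ^ 2 + ε ^ 2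
def u (p : ℝ × ℝ) : ℝ := p.1 * p.2 * Real.log (S ε p)
def u₁ (p : ℝ × ℝ) : ℝ := p.2 * Real.log (S ε p) + 2 * p.1 ^ 2 * p.2 / S ε p
def u₂ (p : ℝ × ℝ) : ℝ := p.1 * Real.log (S ε p) + 2 * p.1 * p.2 ^ 2 / S ε p
def u₁₁ (p : ℝ × ℝ) : ℝ := 6 * p.1 * p.2 / S ε p - 4 * p.1 ^ 3 * p.2 / (S ε p) ^ 2
def u₁₂ (p : ℝ × ℝ) : ℝ :=
  Real.log (S ε p) + 2 * p.1 ^ 2 / S ε p + 2 * p.2 ^ 2 / S ε p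
    - 4 * p.1 ^ 2 * p.2 ^ 2 / (S ε p) ^ 2
def u₂₂ (p : ℝ × ℝ) : ℝ := 6 * p.1 * p.2 / S ε p - 4 * p.1 * p.2 ^ 3 / (S ε p) ^ 2

variable {ε}

lemma S_pos (hε : 0 < ε) (p : ℝ × ℝ) : 0 < S ε p := by
  have h : 0 < ε ^ 2 := by positivity
  have := sq_nonneg p.1; have := sq_nonneg p.2
  simp only [S]; linarith

lemma hasS (p : ℝ × ℝ) : HasFDerivAt (S ε) (mkL (2 * p.1) (2 * p.2)) p := by
  have hfun : S ε = fun p : ℝ × ℝ => p.1 * p.1 + p.2 * p.2 + ε ^ 2 := by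
    funext p; simp [S]; ring
  rw [hfun]
  have hfst : HasFDerivAt (fun p : ℝ × ℝ => p.1) (ContinuousLinearMap.fst ℝ ℝ ℝ) p :=
    hasFDerivAt_fst
  have hsnd : HasFDerivAt (fun p : ℝ × ℝ => p.2) (ContinuousLinearMap.snd ℝ ℝ ℝ) p :=
    hasFDerivAt_snd
  have h := ((hfst.mul hfst).add (hsnd.mul hsnd)).add_const (ε ^ 2)
  refine h.congr_fderiv ?_
  ext v <;> simp [mkL, smul_eq_mul] <;> ring

lemma hasLog (hε : 0 < ε) (p : ℝ × ℝ) :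
    HasFDerivAt (fun p => Real.log (S ε p)) (mkL (2 * p.1 / S ε p) (2 * p.2 / S ε p)) p := by
  have h := (Real.hasDerivAt_log (S_pos hε p).ne').comp_hasFDerivAt p (hasS p)
  refine h.congr_fderiv ?_
  ext v <;> simp [mkL, smul_eq_mul] <;> ring

lemma hasInvS (hε : 0 < ε) (p : ℝ × ℝ) :
    HasFDerivAt (fun q => (S ε q)⁻¹)
      (mkL (-(2 * p.1) / S ε p ^ 2) (-(2 * p.2) / S ε p ^ 2)) p := by
  have h := (hasDerivAt_inv (S_pos hε p).ne').comp_hasFDerivAt p (hasS p)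
  refine h.congr_fderiv ?_
  have hs := (S_pos hε p).ne'
  ext v <;> simp [mkL, smul_eq_mul] <;> field_simp <;> ring

lemma hasU (hε : 0 < ε) (p : ℝ × ℝ) : HasFDerivAt (u ε) (mkL (u₁ ε p) (u₂ ε p)) p := by
  have h := (hasFDerivAt_fst.mul hasFDerivAt_snd).mul (hasLog hε p)
  refine h.congr_fderiv ?_
  have hs := (S_pos hε p).ne'
  ext v <;> simp [mkL, u₁, u₂, smul_eq_mul] <;> field_simp <;> ring

lemma hasU₁ (hε : 0 < ε) (p : ℝ × ℝ) :
    HasFDerivAt (u₁ ε) (mkL (u₁₁ ε p) (u₁₂ ε p)) p := by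
  have hs := (S_pos hε p).ne'
  have hfst : HasFDerivAt (fun p : ℝ × ℝ => p.1) (ContinuousLinearMap.fst ℝ ℝ ℝ) p :=
    hasFDerivAt_fst
  have hsnd : HasFDerivAt (fun p : ℝ × ℝ => p.2) (ContinuousLinearMap.snd ℝ ℝ ℝ) p :=
    hasFDerivAt_snd
  have hfun : u₁ ε = fun p : ℝ × ℝ =>
      p.2 * Real.log (S ε p) + 2 * (p.1 * p.1) * p.2 * (S ε p)⁻¹ := by
    funext q; simp [u₁]; field_simp
  rw [hfun]
  have h := (hsnd.mul (hasLog hε p)).add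
    ((((hfst.mul hfst).const_mul 2).mul hsnd).mul (hasInvS hε p))
  refine h.congr_fderiv ?_
  ext v <;> simp [mkL, u₁₁, u₁₂, smul_eq_mul] <;> field_simp <;> ring

lemma hasU₂ (hε : 0 < ε) (p : ℝ × ℝ) :
    HasFDerivAt (u₂ ε) (mkL (u₁₂ ε p) (u₂₂ ε p)) p := by
  have hs := (S_pos hε p).ne'
  have hfst : HasFDerivAt (fun p : ℝ × ℝ => p.1) (ContinuousLinearMap.fst ℝ ℝ ℝ) p :=
    hasFDerivAt_fst
  have hsnd : HasFDerivAt (fun p : ℝ × ℝ => p.2) (ContinuousLinearMap.snd ℝ ℝ ℝ) p :=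
    hasFDerivAt_snd
  have hfun : u₂ ε = fun p : ℝ × ℝ =>
      p.1 * Real.log (S ε p) + 2 * p.1 * (p.2 * p.2) * (S ε p)⁻¹ := by
    funext q; simp [u₂]; field_simp
  rw [hfun]
  have h := (hfst.mul (hasLog hε p)).add
    ((((hfst.const_mul 2).mul (hsnd.mul hsnd))).mul (hasInvS hε p))
  refine h.congr_fderiv ?_
  ext v <;> simp [mkL, u₁₂, u₂₂, smul_eq_mul] <;> field_simp <;> ring

def ψb : ContDiffBump (0 : ℝ) := ⟨1, 2, one_pos, one_lt_two⟩
def ψ : ℝ → ℝ := ψb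
def ψ' : ℝ → ℝ := deriv ψ
def ψ'' : ℝ → ℝ := deriv ψ'

lemma contDiff_ψ : ContDiff ℝ ∞ ψ := ψb.contDiff
lemma contDiff_ψ' : ContDiff ℝ ∞ ψ' := (contDiff_infty_iff_deriv.mp contDiff_ψ).2
lemma contDiff_ψ'' : ContDiff ℝ ∞ ψ'' := (contDiff_infty_iff_deriv.mp contDiff_ψ').2

lemma hasDψ (t : ℝ) : HasDerivAt ψ (ψ' t) t :=
  ((contDiff_ψ.differentiable (by norm_num)) t).hasDerivAt
lemma hasDψ' (t : ℝ) : HasDerivAt ψ' (ψ'' t) t :=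
  ((contDiff_ψ'.differentiable (by norm_num)) t).hasDerivAt

variable (ε)

def g (p : ℝ × ℝ) : ℝ := ψ p.1 * ψ p.2 * u ε p
def g₁ (p : ℝ × ℝ) : ℝ := ψ' p.1 * ψ p.2 * u ε p + ψ p.1 * ψ p.2 * u₁ ε p
def g₂ (p : ℝ × ℝ) : ℝ := ψ p.1 * ψ' p.2 * u ε p + ψ p.1 * ψ p.2 * u₂ ε p
def g₁₁ (p : ℝ × ℝ) : ℝ :=
  ψ'' p.1 * ψ p.2 * u ε p + 2 * (ψ' p.1 * ψ p.2 * u₁ ε p) + ψ p.1 * ψ p.2 * u₁₁ ε p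
def g₁₂ (p : ℝ × ℝ) : ℝ :=
  ψ' p.1 * ψ' p.2 * u ε p + ψ' p.1 * ψ p.2 * u₂ ε p + ψ p.1 * ψ' p.2 * u₁ ε p
    + ψ p.1 * ψ p.2 * u₁₂ ε p
def g₂₂ (p : ℝ × ℝ) : ℝ :=
  ψ p.1 * ψ'' p.2 * u ε p + 2 * (ψ p.1 * ψ' p.2 * u₂ ε p) + ψ p.1 * ψ p.2 * u₂₂ ε p

variable {ε}

lemma hasG (hε : 0 < ε) (p : ℝ × ℝ) :
    HasFDerivAt (g ε) (mkL (g₁ ε p) (g₂ ε p)) p := by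
  have hfst : HasFDerivAt (fun p : ℝ × ℝ => p.1) (ContinuousLinearMap.fst ℝ ℝ ℝ) p :=
    hasFDerivAt_fst
  have hsnd : HasFDerivAt (fun p : ℝ × ℝ => p.2) (ContinuousLinearMap.snd ℝ ℝ ℝ) p :=
    hasFDerivAt_snd
  have hψ1 : HasFDerivAt (fun q : ℝ × ℝ => ψ q.1) (ψ' p.1 • ContinuousLinearMap.fst ℝ ℝ ℝ) p :=
    (hasDψ p.1).comp_hasFDerivAt p hfst
  have hψ2 : HasFDerivAt (fun q : ℝ × ℝ => ψ q.2) (ψ' p.2 • ContinuousLinearMap.snd ℝ ℝ ℝ) p :=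
    (hasDψ p.2).comp_hasFDerivAt p hsnd
  exact ((hψ1.mul hψ2).mul (hasU hε p)).congr_fderiv (by
    ext v <;> simp [mkL, g₁, g₂, smul_eq_mul] <;> ring)

lemma hasG₁ (hε : 0 < ε) (p : ℝ × ℝ) :
    HasFDerivAt (g₁ ε) (mkL (g₁₁ ε p) (g₁₂ ε p)) p := by
  have hfst : HasFDerivAt (fun p : ℝ × ℝ => p.1) (ContinuousLinearMap.fst ℝ ℝ ℝ) p :=
    hasFDerivAt_fst
  have hsnd : HasFDerivAt (fun p : ℝ × ℝ => p.2) (ContinuousLinearMap.snd ℝ ℝ ℝ) p :=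
    hasFDerivAt_snd
  have hψ1 : HasFDerivAt (fun q : ℝ × ℝ => ψ q.1) (ψ' p.1 • ContinuousLinearMap.fst ℝ ℝ ℝ) p :=
    (hasDψ p.1).comp_hasFDerivAt p hfst
  have hψ2 : HasFDerivAt (fun q : ℝ × ℝ => ψ q.2) (ψ' p.2 • ContinuousLinearMap.snd ℝ ℝ ℝ) p :=
    (hasDψ p.2).comp_hasFDerivAt p hsnd
  have hψ'1 : HasFDerivAt (fun q : ℝ × ℝ => ψ' q.1) (ψ'' p.1 • ContinuousLinearMap.fst ℝ ℝ ℝ) p :=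
    (hasDψ' p.1).comp_hasFDerivAt p hfst
  exact (((hψ'1.mul hψ2).mul (hasU hε p)).add ((hψ1.mul hψ2).mul (hasU₁ hε p))).congr_fderiv (by
    ext v <;> simp [mkL, g₁₁, g₁₂, smul_eq_mul] <;> ring)

lemma hasG₂ (hε : 0 < ε) (p : ℝ × ℝ) :
    HasFDerivAt (g₂ ε) (mkL (g₁₂ ε p) (g₂₂ ε p)) p := by
  have hfst : HasFDerivAt (fun p : ℝ × ℝ => p.1) (ContinuousLinearMap.fst ℝ ℝ ℝ) p :=
    hasFDerivAt_fst
  have hsnd : HasFDerivAt (fun p : ℝ × ℝ => p.2) (ContinuousLinearMap.snd ℝ ℝ ℝ) p :=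
    hasFDerivAt_snd
  have hψ1 : HasFDerivAt (fun q : ℝ × ℝ => ψ q.1) (ψ' p.1 • ContinuousLinearMap.fst ℝ ℝ ℝ) p :=
    (hasDψ p.1).comp_hasFDerivAt p hfst
  have hψ2 : HasFDerivAt (fun q : ℝ × ℝ => ψ q.2) (ψ' p.2 • ContinuousLinearMap.snd ℝ ℝ ℝ) p :=
    (hasDψ p.2).comp_hasFDerivAt p hsnd
  have hψ'2 : HasFDerivAt (fun q : ℝ × ℝ => ψ' q.2) (ψ'' p.2 • ContinuousLinearMap.snd ℝ ℝ ℝ) p :=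
    (hasDψ' p.2).comp_hasFDerivAt p hsnd
  exact (((hψ1.mul hψ'2).mul (hasU hε p)).add ((hψ1.mul hψ2).mul (hasU₂ hε p))).congr_fderiv (by
    ext v <;> simp [mkL, g₁₂, g₂₂, smul_eq_mul] <;> ring)

open Metric in
lemma ψ_zero {t : ℝ} (ht : 2 ≤ |t|) : ψ t = 0 :=
  ψb.zero_of_le_dist (by simpa [Real.dist_eq, ψb] using ht)

open Metric in
lemma ψ'_zero {t : ℝ} (ht : 2 < |t|) : ψ' t = 0 := by
  by_contra h
  have h1 : t ∈ tsupport (ψ : ℝ → ℝ) := support_deriv_subset (by simpa [ψ'] using h)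
  unfold ψ at h1
  rw [ψb.tsupport_eq] at h1
  simp only [mem_closedBall, Real.dist_eq, sub_zero] at h1
  have hr : ψb.rOut = 2 := rfl
  linarith [hr ▸ h1]
open Metric in
lemma ψ''_zero {t : ℝ} (ht : 2 < |t|) : ψ'' t = 0 := by
  by_contra h
  have h1 : t ∈ tsupport ψ' := support_deriv_subset (by simpa [ψ''] using h)
  have h2 : tsupport ψ' ⊆ closedBall 0 2 := by
    apply closure_minimal _ isClosed_closedBall
    intro s hs
    by_contra hs2
    simp only [mem_closedBall, Real.dist_eq, sub_zero, not_le] at hs2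
    exact hs (ψ'_zero hs2)
  have := h2 h1
  simp only [mem_closedBall, Real.dist_eq, sub_zero] at this
  linarith

open Metric in
lemma ψ_one {t : ℝ} (ht : |t| ≤ 1) : ψ t = 1 :=
  ψb.one_of_mem_closedBall (by simpa [Real.dist_eq, ψb] using ht)

open Metric in
lemma ψ'_zero' {t : ℝ} (ht : |t| < 1) : ψ' t = 0 := by
  have hev : ψ =ᶠ[nhds t] fun _ => 1 := by
    filter_upwards [Metric.ball_mem_nhds t (by linarith : (0:ℝ) < 1 - |t|)] with s hs
    apply ψ_one
    simp only [mem_ball, Real.dist_eq] at hs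
    calc |s| ≤ |s - t| + |t| := by simpa using abs_add_le (s - t) t
    _ ≤ 1 := by linarith
  rw [ψ', hev.deriv_eq, deriv_const]

open Metric in
lemma ψ''_zero' {t : ℝ} (ht : |t| < 1) : ψ'' t = 0 := by
  have hev : ψ' =ᶠ[nhds t] fun _ => 0 := by
    filter_upwards [Metric.ball_mem_nhds t (by linarith : (0:ℝ) < 1 - |t|)] with s hs
    apply ψ'_zero'
    simp only [mem_ball, Real.dist_eq] at hs
    calc |s| ≤ |s - t| + |t| := by simpa using abs_add_le (s - t) t
    _ < 1 := by linarith
  rw [ψ'', hev.deriv_eq, deriv_const]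

lemma ψ_abs_le_one (t : ℝ) : |ψ t| ≤ 1 := by
  unfold ψ
  rw [abs_of_nonneg (ψb.nonneg' t)]; exact ψb.le_one

lemma abs_mul3_le {x y z X Y Z : ℝ} (hx : |x| ≤ X) (hy : |y| ≤ Y) (hz : |z| ≤ Z) :
    |x * y * z| ≤ X * Y * Z := by
  have hX : 0 ≤ X := (abs_nonneg x).trans hx
  have hY : 0 ≤ Y := (abs_nonneg y).trans hy
  have hZ : 0 ≤ Z := (abs_nonneg z).trans hz
  rw [abs_mul, abs_mul]
  gcongr <;> first | exact abs_nonneg _ | assumption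

lemma deltaU_bound (hε : 0 < ε) (p : ℝ × ℝ) : |u₁₁ ε p + u₂₂ ε p| ≤ 6 := by
  obtain ⟨a, b⟩ := p
  have hs : 0 < S ε (a, b) := S_pos hε _
  have hsd : S ε (a, b) = a ^ 2 + b ^ 2 + ε ^ 2 := rfl
  have heq : u₁₁ ε (a, b) + u₂₂ ε (a, b) =
      (12 * a * b * S ε (a, b) - 4 * a ^ 3 * b - 4 * a * b ^ 3) / S ε (a, b) ^ 2 := by
    simp only [u₁₁, u₂₂]
    field_simp
    ring
  rw [heq, abs_div, abs_of_pos (by positivity : (0:ℝ) < S ε (a, b) ^ 2),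
    div_le_iff₀ (by positivity)]
  rw [abs_le]
  constructor <;>
  nlinarith [mul_nonneg (sq_nonneg (a + b)) (sq_nonneg (a - b)),
    mul_nonneg (add_nonneg (sq_nonneg a) (sq_nonneg b)) (sq_nonneg (a - b)),
    mul_nonneg (add_nonneg (sq_nonneg a) (sq_nonneg b)) (sq_nonneg (a + b)),
    mul_nonneg (sq_nonneg ε) (sq_nonneg (a - b)),
    mul_nonneg (sq_nonneg ε) (sq_nonneg (a + b)),
    sq_nonneg (ε ^ 2), sq_nonneg (a * b), sq_nonneg (a ^ 2 + b ^ 2), hs, sq_nonneg ε]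

lemma deltaG_bound (hε : 0 < ε) (hε1 : ε ≤ 1) {M : ℝ} (hM : 1 ≤ M)
    (hM1 : ∀ t, |ψ' t| ≤ M) (hM2 : ∀ t, |ψ'' t| ≤ M) (p : ℝ × ℝ) :
    |g₁₁ ε p + g₂₂ ε p| ≤ 300 * M := by
  obtain ⟨a, b⟩ := p
  by_cases hbox : |a| ≤ 2 ∧ |b| ≤ 2
  · by_cases hin : |a| < 1 ∧ |b| < 1
    · have key : g₁₁ ε (a, b) + g₂₂ ε (a, b) = u₁₁ ε (a, b) + u₂₂ ε (a, b) := by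
        simp [g₁₁, g₂₂, ψ_one hin.1.le, ψ_one hin.2.le, ψ'_zero' hin.1, ψ'_zero' hin.2,
          ψ''_zero' hin.1, ψ''_zero' hin.2]
      rw [key]
      have := deltaU_bound hε (a, b)
      linarith
    · have hs1 : 1 ≤ S ε (a, b) := by
        have hsd : S ε (a, b) = a ^ 2 + b ^ 2 + ε ^ 2 := rfl
        rcases not_and_or.mp hin with h | h <;> push_neg at h <;>
          nlinarith [sq_abs a, sq_abs b, sq_nonneg ε, sq_nonneg a, sq_nonneg b, abs_nonneg a,
            abs_nonneg b]
      have hS9 : S ε (a, b) ≤ 9 := by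
        have hsd : S ε (a, b) = a ^ 2 + b ^ 2 + ε ^ 2 := rfl
        nlinarith [sq_abs a, sq_abs b, abs_nonneg a, abs_nonneg b, hbox.1, hbox.2, hε1, hε]
      have hlog : |Real.log (S ε (a, b))| ≤ 9 := by
        rw [abs_of_nonneg (Real.log_nonneg hs1)]
        have := Real.log_le_sub_one_of_pos (by linarith : (0:ℝ) < S ε (a, b))
        linarith
      have ha2 : |a ^ 2| ≤ 4 := by
        rw [abs_of_nonneg (sq_nonneg a), ← sq_abs]; nlinarith [abs_nonneg a, hbox.1]
      have hb2 : |b ^ 2| ≤ 4 := by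
        rw [abs_of_nonneg (sq_nonneg b), ← sq_abs]; nlinarith [abs_nonneg b, hbox.2]
      have habs_div : ∀ X : ℝ, |X / S ε (a, b)| ≤ |X| := by
        intro X
        rw [abs_div, abs_of_pos (by linarith : (0:ℝ) < S ε (a, b))]
        exact div_le_self (abs_nonneg X) hs1
      have hu : |u ε (a, b)| ≤ 36 := by
        have h36 := abs_mul3_le hbox.1 hbox.2 hlog
        have : (2:ℝ) * 2 * 9 = 36 := by norm_num
        rw [this] at h36
        simpa [u] using h36
      have hu1 : |u₁ ε (a, b)| ≤ 34 := by
        have h1 : |b * Real.log (S ε (a, b))| ≤ 18 := by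
          rw [abs_mul]; nlinarith [abs_nonneg b, abs_nonneg (Real.log (S ε (a, b))), hbox.2, hlog]
        have h2 : |2 * a ^ 2 * b / S ε (a, b)| ≤ 16 := by
          refine (habs_div _).trans ?_
          rw [abs_mul, abs_mul, abs_two]
          nlinarith [abs_nonneg (a^2), abs_nonneg b, hbox.2, ha2]
        calc |u₁ ε (a, b)| ≤ |b * Real.log (S ε (a, b))| + |2 * a ^ 2 * b / S ε (a, b)| := by
              simpa [u₁] using abs_add_le (b * Real.log (S ε (a, b))) (2 * a ^ 2 * b / S ε (a, b))
        _ ≤ 34 := by linarith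
      have hu2 : |u₂ ε (a, b)| ≤ 34 := by
        have h1 : |a * Real.log (S ε (a, b))| ≤ 18 := by
          rw [abs_mul]; nlinarith [abs_nonneg a, abs_nonneg (Real.log (S ε (a, b))), hbox.1, hlog]
        have h2 : |2 * a * b ^ 2 / S ε (a, b)| ≤ 16 := by
          refine (habs_div _).trans ?_
          rw [abs_mul, abs_mul, abs_two]
          nlinarith [abs_nonneg a, abs_nonneg (b^2), hbox.1, hb2]
        calc |u₂ ε (a, b)| ≤ |a * Real.log (S ε (a, b))| + |2 * a * b ^ 2 / S ε (a, b)| := by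
              simpa [u₂] using abs_add_le (a * Real.log (S ε (a, b))) (2 * a * b ^ 2 / S ε (a, b))
        _ ≤ 34 := by linarith
      have hΔu := deltaU_bound hε (a, b)
      have key : g₁₁ ε (a, b) + g₂₂ ε (a, b) =
          ψ'' a * ψ b * u ε (a, b) + ψ a * ψ'' b * u ε (a, b)
            + 2 * (ψ' a * ψ b * u₁ ε (a, b)) + 2 * (ψ a * ψ' b * u₂ ε (a, b))
            + ψ a * ψ b * (u₁₁ ε (a, b) + u₂₂ ε (a, b)) := by
        simp only [g₁₁, g₂₂]; ring
      have b1 : |ψ'' a * ψ b * u ε (a, b)| ≤ M * 1 * 36 :=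
        abs_mul3_le (hM2 a) (ψ_abs_le_one b) hu
      have b2 : |ψ a * ψ'' b * u ε (a, b)| ≤ 1 * M * 36 :=
        abs_mul3_le (ψ_abs_le_one a) (hM2 b) hu
      have b3 : |ψ' a * ψ b * u₁ ε (a, b)| ≤ M * 1 * 34 :=
        abs_mul3_le (hM1 a) (ψ_abs_le_one b) hu1
      have b4 : |ψ a * ψ' b * u₂ ε (a, b)| ≤ 1 * M * 34 :=
        abs_mul3_le (ψ_abs_le_one a) (hM1 b) hu2
      have b5 : |ψ a * ψ b * (u₁₁ ε (a, b) + u₂₂ ε (a, b))| ≤ 1 * 1 * 6 :=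
        abs_mul3_le (ψ_abs_le_one a) (ψ_abs_le_one b) hΔu
      rw [key]
      have t1 := abs_add_le (ψ'' a * ψ b * u ε (a, b)) (ψ a * ψ'' b * u ε (a, b))
      have t2 := abs_add_le (ψ'' a * ψ b * u ε (a, b) + ψ a * ψ'' b * u ε (a, b))
        (2 * (ψ' a * ψ b * u₁ ε (a, b)))
      have t3 := abs_add_le (ψ'' a * ψ b * u ε (a, b) + ψ a * ψ'' b * u ε (a, b)
        + 2 * (ψ' a * ψ b * u₁ ε (a, b))) (2 * (ψ a * ψ' b * u₂ ε (a, b)))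
      have t4 := abs_add_le (ψ'' a * ψ b * u ε (a, b) + ψ a * ψ'' b * u ε (a, b)
        + 2 * (ψ' a * ψ b * u₁ ε (a, b)) + 2 * (ψ a * ψ' b * u₂ ε (a, b)))
        (ψ a * ψ b * (u₁₁ ε (a, b) + u₂₂ ε (a, b)))
      have habs2 : ∀ X : ℝ, |2 * X| = 2 * |X| := by
        intro X; rw [abs_mul, abs_two]
      rw [habs2] at t2 t3
      linarith
  · rcases not_and_or.mp hbox with h | h <;> push_neg at h
    · have e0 := ψ_zero h.le
      have e1 := ψ'_zero h
      have e2 := ψ''_zero h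
      simp only [g₁₁, g₂₂, e0, e1, e2, zero_mul, mul_zero, add_zero, zero_add, abs_zero]
      simp
      linarith
    · have e0 := ψ_zero h.le
      have e1 := ψ'_zero h
      have e2 := ψ''_zero h
      simp only [g₁₁, g₂₂, e0, e1, e2, zero_mul, mul_zero, add_zero, zero_add, abs_zero]
      simp
      linarith

lemma g₁₂_zero_val (hε : 0 < ε) : g₁₂ ε (0, 0) = Real.log (ε ^ 2) := by
  simp [g₁₂, u, u₁, u₂, u₁₂, S, ψ_one (by norm_num : |(0:ℝ)| ≤ 1)]

lemma cont_g₁₂ (hε : 0 < ε) : Continuous (g₁₂ ε) := by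
  have hSne : ∀ p, S ε p ≠ 0 := fun p => (S_pos hε p).ne'
  have hS : Continuous (S ε) := by unfold S; fun_prop
  have hlog : Continuous fun p => Real.log (S ε p) := hS.log hSne
  have hS2ne : ∀ p : ℝ × ℝ, (S ε p) ^ 2 ≠ 0 := fun p => pow_ne_zero _ (hSne p)
  have hψc : Continuous ψ := contDiff_ψ.continuous
  have hψ'c : Continuous ψ' := contDiff_ψ'.continuous
  have hcu : Continuous (u ε) := by
    unfold u; exact (continuous_fst.mul continuous_snd).mul hlog
  have hcu₁ : Continuous (u₁ ε) := by
    unfold u₁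
    exact (continuous_snd.mul hlog).add ((by fun_prop : Continuous fun p : ℝ × ℝ =>
      2 * p.1 ^ 2 * p.2).div hS hSne)
  have hcu₂ : Continuous (u₂ ε) := by
    unfold u₂
    exact (continuous_fst.mul hlog).add ((by fun_prop : Continuous fun p : ℝ × ℝ =>
      2 * p.1 * p.2 ^ 2).div hS hSne)
  have hcu₁₂ : Continuous (u₁₂ ε) := by
    unfold u₁₂
    exact ((hlog.add ((by fun_prop : Continuous fun p : ℝ × ℝ => 2 * p.1 ^ 2).div hS hSne)).add
      ((by fun_prop : Continuous fun p : ℝ × ℝ => 2 * p.2 ^ 2).div hS hSne)).sub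
      ((by fun_prop : Continuous fun p : ℝ × ℝ => 4 * p.1 ^ 2 * p.2 ^ 2).div (hS.pow 2) hS2ne)
  unfold g₁₂
  fun_prop

lemma g₁₂_vanish {a b : ℝ} (h : 2 < |a| ∨ 2 < |b|) : g₁₂ ε (a, b) = 0 := by
  rcases h with h | h <;> simp [g₁₂, ψ_zero h.le, ψ'_zero h]

lemma g_vanish {a b : ℝ} (h : 2 < |a| ∨ 2 < |b|) : g ε (a, b) = 0 := by
  rcases h with h | h <;> simp [g, ψ_zero h.le]

open Metric in
lemma coord_big {x : EuclideanSpace ℝ (Fin 2)}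
    (hx : x ∉ closedBall (0 : EuclideanSpace ℝ (Fin 2)) 3) : 2 < |x 0| ∨ 2 < |x 1| := by
  by_contra hcon
  push_neg at hcon
  apply hx
  rw [mem_closedBall, dist_zero_right]
  have hn : ‖x‖ = Real.sqrt (‖x 0‖ ^ 2 + ‖x 1‖ ^ 2) := by
    rw [EuclideanSpace.norm_eq]; simp [Fin.sum_univ_two]
  have harg : ‖x 0‖ ^ 2 + ‖x 1‖ ^ 2 ≤ 9 := by
    simp only [Real.norm_eq_abs]
    nlinarith [hcon.1, hcon.2, abs_nonneg (x 0), abs_nonneg (x 1)]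
  rw [hn]
  calc Real.sqrt (‖x 0‖ ^ 2 + ‖x 1‖ ^ 2) ≤ Real.sqrt 9 := Real.sqrt_le_sqrt harg
  _ = 3 := by rw [show (9:ℝ) = 3 ^ 2 by norm_num, Real.sqrt_sq (by norm_num : (0:ℝ) ≤ 3)]

open Metric in
lemma hcs_of_vanish {f : ℝ × ℝ → ℝ} (hv : ∀ a b : ℝ, (2 < |a| ∨ 2 < |b|) → f (a, b) = 0) :
    HasCompactSupport fun x : EuclideanSpace ℝ (Fin 2) => f (π2 x) :=
  HasCompactSupport.intro (isCompact_closedBall (0 : EuclideanSpace ℝ (Fin 2)) 3)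
    (fun x hx => hv _ _ (coord_big hx))

lemma contDiff_g (hε : 0 < ε) : ContDiff ℝ ∞ (g ε) := by
  have hS : ContDiff ℝ ∞ (S ε) := by unfold S; fun_prop
  have hlog : ContDiff ℝ ∞ fun p => Real.log (S ε p) := hS.log (fun p => (S_pos hε p).ne')
  unfold g u
  exact ((contDiff_ψ.comp contDiff_fst).mul (contDiff_ψ.comp contDiff_snd)).mul
    ((contDiff_fst.mul contDiff_snd).mul hlog)

end

/-- There is no constant `C` such that `sup |∂₁∂₂h| ≤ C · sup |Δh|` for all smooth
compactly supported `h : ℝ² → ℝ`. -/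
theorem stmt_5 : ¬ ∃ C : ℝ, 0 ≤ C ∧
    ∀ h : EuclideanSpace ℝ (Fin 2) → ℝ,
      ContDiff ℝ ((⊤ : ℕ∞) : WithTop ℕ∞) h → HasCompactSupport h →
      (⨆ x, |pd 0 (pd 1 h) x|) ≤
        C * ⨆ x, |pd 0 (pd 0 h) x + pd 1 (pd 1 h) x| := by
  rintro ⟨C, hC0, hC⟩
  -- bounds for the bump derivatives
  have hcsψ : HasCompactSupport ψ := ψb.hasCompactSupport
  obtain ⟨M1, hM1⟩ := contDiff_ψ'.continuous.bounded_above_of_compact_support hcsψ.deriv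
  obtain ⟨M2, hM2⟩ := contDiff_ψ''.continuous.bounded_above_of_compact_support hcsψ.deriv.deriv
  set M : ℝ := max (max M1 M2) 1 with hMdef
  have hM : 1 ≤ M := le_max_right _ _
  have hM1' : ∀ t, |ψ' t| ≤ M := fun t => by
    have := hM1 t
    rw [Real.norm_eq_abs] at this
    exact this.trans ((le_max_left M1 M2).trans (le_max_left _ _))
  have hM2' : ∀ t, |ψ'' t| ≤ M := fun t => by
    have := hM2 t
    rw [Real.norm_eq_abs] at this
    exact this.trans ((le_max_right M1 M2).trans (le_max_left _ _))
  set K : ℝ := 300 * M with hKdef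
  have hK0 : 0 ≤ K := by positivity
  have hCK : 0 ≤ C * K := mul_nonneg hC0 hK0
  set ε : ℝ := Real.exp (-(C * K + 1)) with hεdef
  have hε : 0 < ε := Real.exp_pos _
  have hε1 : ε ≤ 1 := Real.exp_le_one_iff.mpr (by linarith)
  set h : EuclideanSpace ℝ (Fin 2) → ℝ := fun x => g ε (π2 x) with hhdef
  have hsmooth : ContDiff ℝ ((⊤ : ℕ∞) : WithTop ℕ∞) h :=
    (contDiff_g hε).comp π2.contDiff
  have hcomp : HasCompactSupport h := hcs_of_vanish (fun a b hab => g_vanish hab)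
  have hb := pd_bridge (g ε) (g₁ ε) (g₂ ε) (hasG hε)
  have hb1 := pd_bridge (g₁ ε) (g₁₁ ε) (g₁₂ ε) (hasG₁ hε)
  have hb2 := pd_bridge (g₂ ε) (g₁₂ ε) (g₂₂ ε) (hasG₂ hε)
  have h01 : pd 0 (pd 1 h) = fun x => g₁₂ ε (π2 x) := by
    rw [hhdef, hb.2]; exact hb2.1
  have h00 : pd 0 (pd 0 h) = fun x => g₁₁ ε (π2 x) := by
    rw [hhdef, hb.1]; exact hb1.1
  have h11 : pd 1 (pd 1 h) = fun x => g₂₂ ε (π2 x) := by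
    rw [hhdef, hb.2]; exact hb2.2
  have spec := hC h hsmooth hcomp
  rw [h01, h00, h11] at spec
  -- upper bound for the right-hand side
  have hsupΔ : (⨆ x : EuclideanSpace ℝ (Fin 2), |g₁₁ ε (π2 x) + g₂₂ ε (π2 x)|) ≤ K :=
    Real.iSup_le (fun x => deltaG_bound hε hε1 hM hM1' hM2' (π2 x)) hK0
  -- lower bound for the left-hand side
  have hbdd : BddAbove (Set.range fun x : EuclideanSpace ℝ (Fin 2) => |g₁₂ ε (π2 x)|) := by
    have hc : Continuous fun x : EuclideanSpace ℝ (Fin 2) => g₁₂ ε (π2 x) :=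
      (cont_g₁₂ hε).comp π2.continuous
    have hcs : HasCompactSupport fun x : EuclideanSpace ℝ (Fin 2) => g₁₂ ε (π2 x) :=
      hcs_of_vanish (fun a b hab => g₁₂_vanish hab)
    simpa [Real.norm_eq_abs] using hc.norm.bddAbove_range_of_hasCompactSupport hcs.norm
  have hval : g₁₂ ε (π2 (0 : EuclideanSpace ℝ (Fin 2))) = 2 * (-(C * K + 1)) := by
    have hπ : π2 (0 : EuclideanSpace ℝ (Fin 2)) = (0, 0) := by
      rw [π2_apply]; norm_num
    rw [hπ, g₁₂_zero_val hε, hεdef]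
    rw [show (Real.exp (-(C * K + 1))) ^ 2 = Real.exp (-(C * K + 1)) * Real.exp (-(C * K + 1))
      from sq _]
    rw [← Real.exp_add, Real.log_exp]
    ring
  have hle : |g₁₂ ε (π2 (0 : EuclideanSpace ℝ (Fin 2)))| ≤
      ⨆ x : EuclideanSpace ℝ (Fin 2), |g₁₂ ε (π2 x)| :=
    le_ciSup hbdd 0
  rw [hval] at hle
  have habs : |2 * (-(C * K + 1))| = 2 * (C * K + 1) := by
    rw [abs_of_nonpos (by linarith)]; ring
  rw [habs] at hle
  have hrhs : C * (⨆ x : EuclideanSpace ℝ (Fin 2), |g₁₁ ε (π2 x) + g₂₂ ε (π2 x)|) ≤ C * K :=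
    mul_le_mul_of_nonneg_left hsupΔ hC0
  linarith
end

section
/- There exists a function ω : (0,∞) → [0,∞) with ω(δ) → 0 as δ → 0⁺, such that the following holds. For every δ > 0, every map f : ℝ² → ℝ² satisfying (1 + δ)⁻¹·‖x − y‖ ≤ ‖f(x) − f(y)‖ ≤ (1 + δ)·‖x − y‖ for all x, y ∈ ℝ², and every closed disk D = closedBall(w,r) with r > 0, there is a rigid mapping T : ℝ² → ℝ² (a surjective isometry of ℝ²) such that r⁻¹ · sup_{x ∈ D} ‖f(x) − T(x)‖ ≤ ω(δ). -/
set_option maxHeartbeats 1000000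

open Metric

noncomputable section JohnHelpers

local notation "E2" => EuclideanSpace ℝ (Fin 2)

def mk2 (a b : ℝ) : E2 := WithLp.toLp 2 ![a, b]
@[simp] lemma mk2_zero (a b : ℝ) : mk2 a b 0 = a := rfl
@[simp] lemma mk2_one (a b : ℝ) : mk2 a b 1 = b := rfl
@[simp] lemma zero_apply2 (i : Fin 2) : (0 : E2) i = 0 := rfl

lemma nsq (z : E2) : ‖z‖^2 = (z 0)^2 + (z 1)^2 := by
  rw [EuclideanSpace.norm_eq, Real.sq_sqrt (by positivity)]
  simp [Fin.sum_univ_two, sq_abs]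

lemma dsq (x y : E2) : dist x y ^2 = (x 0 - y 0)^2 + (x 1 - y 1)^2 := by
  rw [EuclideanSpace.dist_eq, Real.sq_sqrt (by positivity)]
  simp [Fin.sum_univ_two, Real.dist_eq, sq_abs]


lemma near_one {y t e : ℝ} (hy2 : y^2 = t) (hy : 0 ≤ y) (hl : 1 - e ≤ t)
    (hr : t ≤ 1 + e) (he0 : 0 < e) (he1 : e ≤ 1) : |y - 1| ≤ e := by
  rw [abs_le]
  constructor
  · nlinarith [mul_self_nonneg (1 - e + y)]
  · nlinarith [mul_self_nonneg (1 + e - y)]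

lemma keyineq {e u0 u1 v0 v1 g0 g1 x0 x1 N a b c s : ℝ}
    (he0 : 0 < e) (heB : e ≤ 21/100)
    (A1 : |u0^2+u1^2 - 1| ≤ e)
    (A2 : |v0^2+v1^2 - 1| ≤ e)
    (A3 : |(u0-v0)^2+(u1-v1)^2 - 2| ≤ 2*e)
    (hx : x0^2 + x1^2 ≤ 1)
    (B1 : |g0^2+g1^2 - (x0^2+x1^2)| ≤ e)
    (B2 : |(g0-u0)^2+(g1-u1)^2 - ((x0-1)^2+x1^2)| ≤ e*((x0-1)^2+x1^2))
    (B3 : |(g0-v0)^2+(g1-v1)^2 - (x0^2+(x1-1)^2)| ≤ e*(x0^2+(x1-1)^2))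
    (hN : N^2 = u0^2+u1^2) (hNpos : 0 < N)
    (ha : a = u0/N) (hb : b = u1/N)
    (hc : c = -b*v0 + a*v1)
    (hsc : s*c = |c|) (hs : s^2 = 1) :
    (g0 - (x0*a - x1*(s*b)))^2 + (g1 - (x0*b + x1*(s*a)))^2 ≤ 80*e := by
  have hee : e*e ≤ (21/100)*e := by nlinarith only [he0, heB]
  obtain ⟨a1l, a1r⟩ := abs_le.mp A1
  obtain ⟨a2l, a2r⟩ := abs_le.mp A2
  obtain ⟨a3l, a3r⟩ := abs_le.mp A3
  obtain ⟨b1l, b1r⟩ := abs_le.mp B1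
  obtain ⟨b2l, b2r⟩ := abs_le.mp B2
  obtain ⟨b3l, b3r⟩ := abs_le.mp B3
  have hx0le : |x0| ≤ 1 := by
    rw [abs_le]
    constructor <;> nlinarith only [hx, sq_nonneg x1, sq_nonneg (x0+1), sq_nonneg (x0-1)]
  have hx1le : |x1| ≤ 1 := by
    rw [abs_le]
    constructor <;> nlinarith only [hx, sq_nonneg x0, sq_nonneg (x1+1), sq_nonneg (x1-1)]
  obtain ⟨x0l, x0r⟩ := abs_le.mp hx0le
  obtain ⟨x1l, x1r⟩ := abs_le.mp hx1le
  have hNe : |N - 1| ≤ e := near_one hN hNpos.le (by linarith) (by linarith) he0 (by linarith)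
  obtain ⟨nl, nr⟩ := abs_le.mp hNe
  have hN34 : 3/4 ≤ N := by linarith
  have hab : a^2 + b^2 = 1 := by
    rw [ha, hb]; field_simp; linarith
  have hu0a : u0 = N*a := by rw [ha]; field_simp
  have hu1b : u1 = N*b := by rw [hb]; field_simp
  have h4a : (x0-1)^2 + x1^2 ≤ 4 := by nlinarith only [hx, x0l]
  have h4b : x0^2 + (x1-1)^2 ≤ 4 := by nlinarith only [hx, x1l]
  have he4a : e*((x0-1)^2+x1^2) ≤ 4*e := by nlinarith only [h4a, he0]
  have he4b : e*(x0^2+(x1-1)^2) ≤ 4*e := by nlinarith only [h4b, he0]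
  have hpa : 0 ≤ e*((x0-1)^2+x1^2) := by positivity
  have hpb : 0 ≤ e*(x0^2+(x1-1)^2) := by positivity
  have C1 : |g0*u0+g1*u1 - x0| ≤ 3*e := by
    rw [abs_le]
    constructor <;> nlinarith only [b1l, b1r, a1l, a1r, b2l, b2r, he4a, hpa]
  have C2 : |g0*v0+g1*v1 - x1| ≤ 3*e := by
    rw [abs_le]
    constructor <;> nlinarith only [b1l, b1r, a2l, a2r, b3l, b3r, he4b, hpb]
  obtain ⟨c1l, c1r⟩ := abs_le.mp C1
  obtain ⟨c2l, c2r⟩ := abs_le.mp C2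
  have hP : |u0*v0 + u1*v1| ≤ 2*e := by
    rw [abs_le]
    constructor <;> nlinarith only [a1l, a1r, a2l, a2r, a3l, a3r]
  obtain ⟨pl, pr⟩ := abs_le.mp hP
  have hNQ : N*(a*v0+b*v1) = u0*v0+u1*v1 := by rw [hu0a, hu1b]; ring
  have hQ : |a*v0 + b*v1| ≤ 3*e := by
    rw [abs_le]
    constructor <;> nlinarith only [hNQ, pl, pr, hN34, he0]
  obtain ⟨ql, qr⟩ := abs_le.mp hQ
  have hqq : (a*v0+b*v1)^2 ≤ 9*(e*e) := by nlinarith only [ql, qr]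
  have hcid : (a*v0+b*v1)^2 + c^2 = v0^2+v1^2 := by
    rw [hc]; linear_combination (v0^2+v1^2) * hab
  have hcl : 1 - 3*e ≤ c^2 := by
    nlinarith only [hcid, a2l, hqq, hee, sq_nonneg (a*v0+b*v1)]
  have hcr : c^2 ≤ 1 + 3*e := by
    nlinarith only [hcid, a2r, sq_nonneg (a*v0+b*v1), he0]
  have hmc : |c|^2 = c^2 := sq_abs c
  have hmnn : (0:ℝ) ≤ |c| := abs_nonneg c
  have hm1 : abs (|c| - 1) ≤ 3*e :=
    near_one hmc hmnn (by linarith) (by linarith) (by linarith) (by linarith)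
  obtain ⟨m1l, m1r⟩ := abs_le.mp hm1
  have hm04 : 37/100 ≤ |c| := by linarith
  have hident : (g0*a+g1*b)^2 + (g0*b - g1*a)^2 = g0^2+g1^2 := by
    linear_combination (g0^2+g1^2)*hab
  have hal : |g0*a+g1*b| ≤ 11/10 := by
    rw [abs_le]
    constructor <;>
      nlinarith only [hident, sq_nonneg (g0*b - g1*a), b1l, b1r, hx, he0, heB]
  have hNα : N*((g0*a+g1*b) - x0) = (g0*u0+g1*u1 - x0) - x0*(N-1) := by
    rw [hu0a, hu1b]; ring
  have hx0N : |x0*(N-1)| ≤ e := by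
    rw [abs_mul]
    calc (|x0|)*(|N-1|) ≤ 1*e :=
          mul_le_mul hx0le hNe (abs_nonneg _) zero_le_one
      _ = e := one_mul e
  obtain ⟨zl, zr⟩ := abs_le.mp hx0N
  have hαx : |(g0*a+g1*b) - x0| ≤ 6*e := by
    rw [abs_le]
    constructor <;> nlinarith only [hNα, c1l, c1r, zl, zr, hN34, he0]
  obtain ⟨axl, axr⟩ := abs_le.mp hαx
  have hβc : (g0*a+g1*b)*(a*v0+b*v1) + (g1*a - g0*b)*c = g0*v0+g1*v1 := by
    rw [hc]; linear_combination (g0*v0+g1*v1)*hab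
  have haq : |(g0*a+g1*b)*(a*v0+b*v1)| ≤ (11/10)*(3*e) := by
    rw [abs_mul]
    exact mul_le_mul hal hQ (abs_nonneg _) (by norm_num)
  obtain ⟨wl, wr⟩ := abs_le.mp haq
  have hβcx : |(g1*a - g0*b)*c - x1| ≤ 7*e := by
    rw [abs_le]
    constructor <;> linarith only [hβc, c2l, c2r, wl, wr]
  have hid2 : (s*(g1*a-g0*b) - x1)*(|c|) = ((g1*a-g0*b)*c - x1) - x1*(|c| - 1) := by
    rw [← hsc]; linear_combination ((g1*a-g0*b)*c)*hs
  have hx1m : |x1*(|c|-1)| ≤ 3*e := by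
    rw [abs_mul]
    calc (|x1|)*(abs (|c|-1)) ≤ 1*(3*e) :=
          mul_le_mul hx1le hm1 (abs_nonneg _) zero_le_one
      _ = 3*e := one_mul _
  have h10 : |(s*(g1*a-g0*b) - x1)*(|c|)| ≤ 10*e := by
    rw [hid2]
    calc |((g1*a-g0*b)*c - x1) - x1*(|c| - 1)|
        ≤ |(g1*a-g0*b)*c - x1| + |x1*(|c| - 1)| := abs_sub _ _
      _ ≤ 7*e + 3*e := add_le_add hβcx hx1m
      _ = 10*e := by ring
  rw [abs_mul, abs_abs] at h10
  have hsβx : |s*(g1*a-g0*b) - x1| ≤ 30*e := by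
    nlinarith only [abs_nonneg (s*(g1*a-g0*b) - x1), h10, hm04, he0]
  obtain ⟨sl, sr⟩ := abs_le.mp hsβx
  have hfin : (g0 - (x0*a - x1*(s*b)))^2 + (g1 - (x0*b + x1*(s*a)))^2
      = (g0^2+g1^2 - (x0^2+x1^2)) - 2*x0*((g0*a+g1*b) - x0)
        - 2*x1*(s*(g1*a - g0*b) - x1) := by
    linear_combination (x0^2 + x1^2*s^2) * hab + x1^2 * hs
  rw [hfin]
  have k1 : (0:ℝ) ≤ (1 - x0)*(6*e - ((g0*a+g1*b) - x0)) :=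
    mul_nonneg (by linarith) (by linarith)
  have k2 : (0:ℝ) ≤ (1 + x0)*(6*e + ((g0*a+g1*b) - x0)) :=
    mul_nonneg (by linarith) (by linarith)
  have k3 : (0:ℝ) ≤ (1 - x1)*(30*e - (s*(g1*a-g0*b) - x1)) :=
    mul_nonneg (by linarith) (by linarith)
  have k4 : (0:ℝ) ≤ (1 + x1)*(30*e + (s*(g1*a-g0*b) - x1)) :=
    mul_nonneg (by linarith) (by linarith)
  nlinarith only [b1r, k1, k2, k3, k4, he0]

lemma rigid_exists (p : E2) (a b s : ℝ) (hab : a^2 + b^2 = 1) (hs : s^2 = 1) :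
    ∃ T : E2 → E2, Isometry T ∧ Function.Surjective T ∧
      ∀ x : E2, T x = p + mk2 (x 0 * a - x 1 * (s*b)) (x 0 * b + x 1 * (s*a)) := by
  refine ⟨fun x => p + mk2 (x 0 * a - x 1 * (s*b)) (x 0 * b + x 1 * (s*a)), ?_, ?_, fun _ => rfl⟩
  · refine Isometry.of_dist_eq fun x y => ?_
    have h2 : dist (p + mk2 (x 0 * a - x 1 * (s*b)) (x 0 * b + x 1 * (s*a)))
        (p + mk2 (y 0 * a - y 1 * (s*b)) (y 0 * b + y 1 * (s*a))) ^ 2 = dist x y ^2 := by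
      rw [dsq, dsq]
      simp only [PiLp.add_apply, mk2_zero, mk2_one]
      linear_combination ((x 0 - y 0)^2 + (x 1 - y 1)^2*s^2) * hab + (x 1 - y 1)^2 * hs
    have h3 := congrArg Real.sqrt h2
    rwa [Real.sqrt_sq dist_nonneg, Real.sqrt_sq dist_nonneg] at h3
  · intro y
    refine ⟨mk2 (a*(y 0 - p 0) + b*(y 1 - p 1)) (s*(a*(y 1 - p 1) - b*(y 0 - p 0))), ?_⟩
    ext i
    fin_cases i <;>
      simp only [PiLp.add_apply, mk2_zero, mk2_one, Fin.isValue, Fin.zero_eta, Fin.mk_one]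
    · linear_combination (y 0 - p 0) * hab + (b^2*(y 0 - p 0) - a*b*(y 1 - p 1)) * hs
    · linear_combination (y 1 - p 1) * hab + (a^2*(y 1 - p 1) - a*b*(y 0 - p 0)) * hs

lemma core {δ : ℝ} (hδ : 0 < δ) (hδ' : δ ≤ 1/10)
    (f : E2 → E2)
    (hf : ∀ x y : E2, (1+δ)⁻¹ * dist x y ≤ dist (f x) (f y) ∧
      dist (f x) (f y) ≤ (1+δ) * dist x y) :
    ∃ T : E2 → E2, Isometry T ∧ Function.Surjective T ∧
      ∀ x ∈ closedBall (0:E2) 1, dist (f x) (T x) ≤ Real.sqrt (10000*δ) := by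
  have hδ1 : (0:ℝ) < 1 + δ := by linarith
  set e : ℝ := δ * (2 + δ) with he
  have he0 : 0 < e := by positivity
  have heB : e ≤ 21/100 := by rw [he]; nlinarith only [hδ, hδ']
  have heD : e ≤ (21/10) * δ := by rw [he]; nlinarith only [hδ, hδ']
  have K : ∀ x y : E2, |dist (f x) (f y)^2 - dist x y^2| ≤ e * dist x y^2 := by
    intro x y
    obtain ⟨h1, h2⟩ := hf x y
    have hd : 0 ≤ dist x y := dist_nonneg
    have hD : 0 ≤ dist (f x) (f y) := dist_nonneg
    have h1' : dist x y ≤ (1+δ) * dist (f x) (f y) := by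
      rw [inv_mul_le_iff₀ hδ1] at h1
      exact h1
    have hupper : dist (f x) (f y)^2 ≤ (1+e) * dist x y^2 := by
      rw [show (1+e) * dist x y^2 = ((1+δ)*dist x y) * ((1+δ)*dist x y) from by rw [he]; ring,
        pow_two]
      exact mul_le_mul h2 h2 hD (by positivity)
    have hlowsq : dist x y^2 ≤ (1+e) * dist (f x) (f y)^2 := by
      rw [show (1+e) * dist (f x) (f y)^2 = ((1+δ)*dist (f x) (f y)) * ((1+δ)*dist (f x) (f y)) from by rw [he]; ring,
        pow_two]
      exact mul_le_mul h1' h1' hd (by positivity)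
    rw [abs_le]
    constructor
    · have h3 : (0:ℝ) ≤ 1 - e := by linarith
      nlinarith only [hlowsq, h3, mul_nonneg (mul_nonneg he0.le he0.le) (sq_nonneg (dist (f x) (f y)))]
    · linarith only [hupper]
  -- anchor facts
  have A1 : |(f (mk2 1 0) 0 - f 0 0)^2 + (f (mk2 1 0) 1 - f 0 1)^2 - 1| ≤ e := by
    have h := K (mk2 1 0) 0
    rw [dsq (f (mk2 1 0)) (f 0), dsq (mk2 1 0) 0] at h
    norm_num at h
    exact h
  have A2 : |(f (mk2 0 1) 0 - f 0 0)^2 + (f (mk2 0 1) 1 - f 0 1)^2 - 1| ≤ e := by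
    have h := K (mk2 0 1) 0
    rw [dsq (f (mk2 0 1)) (f 0), dsq (mk2 0 1) 0] at h
    norm_num at h
    exact h
  have A3 : |((f (mk2 1 0) 0 - f 0 0) - (f (mk2 0 1) 0 - f 0 0))^2
      + ((f (mk2 1 0) 1 - f 0 1) - (f (mk2 0 1) 1 - f 0 1))^2 - 2| ≤ 2*e := by
    have h := K (mk2 1 0) (mk2 0 1)
    rw [dsq (f (mk2 1 0)) (f (mk2 0 1)), dsq (mk2 1 0) (mk2 0 1)] at h
    norm_num at h
    rw [show (f (mk2 1 0) 0 - f 0 0) - (f (mk2 0 1) 0 - f 0 0)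
          = f (mk2 1 0) 0 - f (mk2 0 1) 0 from by ring,
        show (f (mk2 1 0) 1 - f 0 1) - (f (mk2 0 1) 1 - f 0 1)
          = f (mk2 1 0) 1 - f (mk2 0 1) 1 from by ring]
    linarith [h]
  -- the frame
  set N : ℝ := Real.sqrt ((f (mk2 1 0) 0 - f 0 0)^2 + (f (mk2 1 0) 1 - f 0 1)^2) with hNdef
  have hN : N^2 = (f (mk2 1 0) 0 - f 0 0)^2 + (f (mk2 1 0) 1 - f 0 1)^2 := by
    rw [hNdef]; exact Real.sq_sqrt (by positivity)
  have hNpos : 0 < N := by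
    have h1 := Real.sqrt_nonneg ((f (mk2 1 0) 0 - f 0 0)^2 + (f (mk2 1 0) 1 - f 0 1)^2)
    rw [← hNdef] at h1
    obtain ⟨l, r⟩ := abs_le.mp A1
    nlinarith only [h1, hN, l, heB]
  set a : ℝ := (f (mk2 1 0) 0 - f 0 0)/N with hadef
  set b : ℝ := (f (mk2 1 0) 1 - f 0 1)/N with hbdef
  set c : ℝ := -b*(f (mk2 0 1) 0 - f 0 0) + a*(f (mk2 0 1) 1 - f 0 1) with hcdef
  set s : ℝ := if 0 ≤ c then (1:ℝ) else -1 with hsdef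
  have hs : s^2 = 1 := by rw [hsdef]; split_ifs <;> norm_num
  have hsc : s*c = |c| := by
    rw [hsdef]
    split_ifs with h
    · rw [abs_of_nonneg h, one_mul]
    · rw [abs_of_neg (not_le.mp h)]; ring
  have hab : a^2 + b^2 = 1 := by
    rw [hadef, hbdef]
    field_simp
    linarith [hN]
  obtain ⟨T, hTiso, hTsurj, hTeq⟩ := rigid_exists (f 0) a b s hab hs
  refine ⟨T, hTiso, hTsurj, ?_⟩
  intro x hx
  have hxn : (x 0)^2 + (x 1)^2 ≤ 1 := by
    rw [mem_closedBall, dist_zero_right] at hx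
    nlinarith only [hx, norm_nonneg x, nsq x]
  -- B facts
  have B1 : |(f x 0 - f 0 0)^2 + (f x 1 - f 0 1)^2 - ((x 0)^2 + (x 1)^2)| ≤ e := by
    have h := K x 0
    rw [dsq (f x) (f 0), dsq x 0] at h
    norm_num at h
    calc |(f x 0 - f 0 0)^2 + (f x 1 - f 0 1)^2 - ((x 0)^2 + (x 1)^2)|
        ≤ e * ((x 0)^2 + (x 1)^2) := h
      _ ≤ e := by nlinarith only [hxn, he0]
  have B2 : |((f x 0 - f 0 0) - (f (mk2 1 0) 0 - f 0 0))^2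
      + ((f x 1 - f 0 1) - (f (mk2 1 0) 1 - f 0 1))^2
      - ((x 0 - 1)^2 + (x 1)^2)| ≤ e*((x 0 - 1)^2 + (x 1)^2) := by
    have h := K x (mk2 1 0)
    rw [dsq (f x) (f (mk2 1 0)), dsq x (mk2 1 0)] at h
    norm_num at h
    rw [show (f x 0 - f 0 0) - (f (mk2 1 0) 0 - f 0 0) = f x 0 - f (mk2 1 0) 0 from by ring,
        show (f x 1 - f 0 1) - (f (mk2 1 0) 1 - f 0 1) = f x 1 - f (mk2 1 0) 1 from by ring]
    exact h
  have B3 : |((f x 0 - f 0 0) - (f (mk2 0 1) 0 - f 0 0))^2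
      + ((f x 1 - f 0 1) - (f (mk2 0 1) 1 - f 0 1))^2
      - ((x 0)^2 + (x 1 - 1)^2)| ≤ e*((x 0)^2 + (x 1 - 1)^2) := by
    have h := K x (mk2 0 1)
    rw [dsq (f x) (f (mk2 0 1)), dsq x (mk2 0 1)] at h
    norm_num at h
    rw [show (f x 0 - f 0 0) - (f (mk2 0 1) 0 - f 0 0) = f x 0 - f (mk2 0 1) 0 from by ring,
        show (f x 1 - f 0 1) - (f (mk2 0 1) 1 - f 0 1) = f x 1 - f (mk2 0 1) 1 from by ring]
    exact h
  have key := keyineq he0 heB A1 A2 A3 hxn B1 B2 B3 hN hNpos hadef hbdef hcdef hsc hs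
  have hd2 : dist (f x) (T x)^2 ≤ 10000*δ := by
    rw [hTeq x, dsq]
    simp only [PiLp.add_apply, mk2_zero, mk2_one]
    nlinarith only [key, heD, hδ]
  rw [← Real.sqrt_sq dist_nonneg]
  exact Real.sqrt_le_sqrt hd2

/-- John's approximation theorem: maps of `ℝ²` distorting distances by at most `1 + δ`
are approximated on every disk by rigid mappings, with error `ω(δ) → 0` as `δ → 0⁺`. -/
theorem stmt_9 : ∃ ω : ℝ → ℝ, (∀ δ : ℝ, 0 < δ → 0 ≤ ω δ) ∧
    Filter.Tendsto ω (nhdsWithin 0 (Set.Ioi 0)) (nhds 0) ∧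
    ∀ δ : ℝ, 0 < δ →
      ∀ f : EuclideanSpace ℝ (Fin 2) → EuclideanSpace ℝ (Fin 2),
        (∀ x y, (1 + δ)⁻¹ * dist x y ≤ dist (f x) (f y) ∧
          dist (f x) (f y) ≤ (1 + δ) * dist x y) →
        ∀ (w : EuclideanSpace ℝ (Fin 2)) (r : ℝ), 0 < r →
          ∃ T : EuclideanSpace ℝ (Fin 2) → EuclideanSpace ℝ (Fin 2),
            Isometry T ∧ Function.Surjective T ∧
            ∀ x ∈ closedBall w r, r⁻¹ * dist (f x) (T x) ≤ ω δ := by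
  classical
  refine ⟨fun δ => if δ ≤ 1/10 then Real.sqrt (10000*δ) else 2 + δ, fun δ hδ => ?_, ?_, ?_⟩
  · dsimp only
    split_ifs with h
    · positivity
    · linarith
  · have h1 : Filter.Tendsto (fun δ : ℝ => Real.sqrt (10000*δ))
        (nhdsWithin 0 (Set.Ioi 0)) (nhds 0) := by
      have h2 : Filter.Tendsto (fun δ : ℝ => Real.sqrt (10000*δ)) (nhds 0)
          (nhds (Real.sqrt (10000*0))) :=
        (Real.continuous_sqrt.comp (continuous_const.mul continuous_id)).tendsto 0
      simp only [mul_zero, Real.sqrt_zero] at h2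
      exact h2.mono_left nhdsWithin_le_nhds
    refine h1.congr' ?_
    have h3 : ∀ᶠ d in nhdsWithin (0:ℝ) (Set.Ioi 0), d < 1/10 :=
      Filter.Eventually.filter_mono nhdsWithin_le_nhds
        (eventually_lt_nhds (by norm_num : (0:ℝ) < 1/10))
    filter_upwards [h3] with d hd
    rw [if_pos hd.le]
  · intro δ hδ f hf w r hr
    by_cases hcs : δ ≤ 1/10
    · -- scaling reduction
      have hg : ∀ x y : E2, (1+δ)⁻¹ * dist x y ≤
          dist (r⁻¹ • f (w + r • x)) (r⁻¹ • f (w + r • y)) ∧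
          dist (r⁻¹ • f (w + r • x)) (r⁻¹ • f (w + r • y)) ≤ (1+δ) * dist x y := by
        intro x y
        have hD := hf (w + r • x) (w + r • y)
        have hdist : dist (w + r • x) (w + r • y) = r * dist x y := by
          rw [dist_add_left, dist_smul₀, Real.norm_eq_abs, abs_of_pos hr]
        have hEq : dist (r⁻¹ • f (w + r • x)) (r⁻¹ • f (w + r • y))
            = r⁻¹ * dist (f (w + r • x)) (f (w + r • y)) := by
          rw [dist_smul₀, Real.norm_eq_abs, abs_of_pos (inv_pos.mpr hr)]
        rw [hdist] at hD
        rw [hEq]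
        have hr' : (0:ℝ) < r⁻¹ := inv_pos.mpr hr
        constructor
        · have := mul_le_mul_of_nonneg_left hD.1 hr'.le
          calc (1+δ)⁻¹ * dist x y = r⁻¹ * ((1+δ)⁻¹ * (r * dist x y)) := by
                field_simp
            _ ≤ r⁻¹ * dist (f (w + r • x)) (f (w + r • y)) := this
        · have := mul_le_mul_of_nonneg_left hD.2 hr'.le
          calc r⁻¹ * dist (f (w + r • x)) (f (w + r • y))
              ≤ r⁻¹ * ((1+δ) * (r * dist x y)) := this
            _ = (1+δ) * dist x y := by field_simp
      obtain ⟨T0, hT0i, hT0s, hT0b⟩ := core hδ hcs (fun y => r⁻¹ • f (w + r • y)) hg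
      refine ⟨fun x => r • T0 (r⁻¹ • (x - w)), ?_, ?_, ?_⟩
      · refine Isometry.of_dist_eq fun x y => ?_
        rw [dist_smul₀, hT0i.dist_eq, dist_smul₀, dist_sub_right,
          Real.norm_eq_abs, Real.norm_eq_abs, abs_of_pos hr, abs_of_pos (inv_pos.mpr hr)]
        field_simp
      · intro y
        obtain ⟨z, hz⟩ := hT0s (r⁻¹ • y)
        refine ⟨w + r • z, ?_⟩
        simp only [add_sub_cancel_left]
        rw [inv_smul_smul₀ hr.ne', hz, smul_inv_smul₀ hr.ne']
      · intro x hx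
        simp only [if_pos hcs]
        have hu : r⁻¹ • (x - w) ∈ closedBall (0:E2) 1 := by
          rw [mem_closedBall, dist_zero_right, norm_smul, Real.norm_eq_abs,
            abs_of_pos (inv_pos.mpr hr)]
          rw [mem_closedBall] at hx
          have h5 : ‖x - w‖ = dist x w := (dist_eq_norm x w).symm
          rw [h5]
          calc r⁻¹ * dist x w ≤ r⁻¹ * r :=
                mul_le_mul_of_nonneg_left hx (inv_pos.mpr hr).le
            _ = 1 := inv_mul_cancel₀ hr.ne'
        have hb := hT0b _ hu
        have hwx : w + r • (r⁻¹ • (x - w)) = x := by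
          rw [smul_inv_smul₀ hr.ne']; abel
        simp only [hwx] at hb
        have hdd : dist (f x) (r • T0 (r⁻¹ • (x - w)))
            = r * dist (r⁻¹ • f x) (T0 (r⁻¹ • (x - w))) := by
          conv_lhs => rw [← smul_inv_smul₀ hr.ne' (f x)]
          rw [dist_smul₀, Real.norm_eq_abs, abs_of_pos hr]
        rw [hdd, ← mul_assoc, inv_mul_cancel₀ hr.ne', one_mul]
        exact hb
    · refine ⟨fun x => f w + (x - w), ?_, ?_, ?_⟩
      · refine Isometry.of_dist_eq fun x y => ?_
        rw [dist_eq_norm, dist_eq_norm]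
        congr 1
        abel
      · intro y
        refine ⟨y - f w + w, ?_⟩
        show f w + ((y - f w + w) - w) = y
        abel
      · intro x hx
        simp only [if_neg hcs]
        rw [mem_closedBall] at hx
        have h1 : dist (f x) (f w + (x - w)) ≤ dist (f x) (f w) + dist (f w) (f w + (x-w)) :=
          dist_triangle _ _ _
        have h2 : dist (f w) (f w + (x - w)) = dist x w := by
          rw [dist_eq_norm]
          have : f w - (f w + (x - w)) = -(x - w) := by abel
          rw [this, norm_neg, ← dist_eq_norm]
        have h3 : dist (f x) (f w) ≤ (1+δ)*dist x w := (hf x w).2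
        rw [inv_mul_le_iff₀ hr]
        nlinarith only [h1, h2, h3, hx, hδ, hr, dist_nonneg (x := x) (y := w)]

end JohnHelpers
end

section
/- Let n ≥ 1 be an integer and let K be a compact subset of ℝⁿ. If K × {0}, regarded as a compact subset of ℝⁿ⁺¹ = ℝⁿ × ℝ, is cellular in ℝⁿ⁺¹, then K is cell-like in ℝⁿ. -/
/-!
A decreasing sequence of compact sets with intersection `K` eventually enters every open
neighbourhood of `K`. So if `K × {0}` is cellular, every open set `U × ℝ` around it contains a
cell, which is contractible; the inclusion `K → U` factors as `x ↦ (x, 0)` into that cell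
followed by the first projection, hence is null-homotopic.
-/

/-- `K ⊆ X` is cellular (with cells modeled on the closed unit ball of `ℝᵐ`) if it is
the intersection of a decreasing sequence of topological `m`-cells, each contained in
the interior of the previous one. -/
def IsCellularIn (X : Type*) [TopologicalSpace X] (m : ℕ) (K : Set X) : Prop :=
  ∃ B : ℕ → Set X,
    (∀ i, Nonempty (↥(B i) ≃ₜ ↥(Metric.closedBall (0 : EuclideanSpace ℝ (Fin m)) 1))) ∧
    (∀ i, B (i + 1) ⊆ interior (B i)) ∧ K = ⋂ i, B i

/-- `K` is cell-like if the inclusion of `K` into any open neighborhood of itself is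
null-homotopic. -/
def IsCellLike {X : Type*} [TopologicalSpace X] (K : Set X) : Prop :=
  ∀ U : Set X, IsOpen U → ∀ (hKU : K ⊆ U),
    ∃ c : ↥U, ContinuousMap.Homotopic
      (⟨Set.inclusion hKU, continuous_inclusion hKU⟩ : C(↥K, ↥U))
      (ContinuousMap.const _ c)

open ContinuousMap

section

variable {X : Type*} [TopologicalSpace X]

lemma ContinuousMap.nullhomotopic_comp_of_contractibleSpace {Y Z : Type*} [TopologicalSpace Y]
    [TopologicalSpace Z] [ContractibleSpace Y] (f : C(X, Y)) (g : C(Y, Z)) :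
    (g.comp f).Nullhomotopic := by
  simpa only [id_comp] using ((id_nullhomotopic Y).comp_left f).comp_right g

lemma isCompact_of_homeomorph_closedBall {m : ℕ} {C : Set X}
    (e : C ≃ₜ Metric.closedBall (0 : EuclideanSpace ℝ (Fin m)) 1) : IsCompact C :=
  have := isCompact_iff_compactSpace.mp (isCompact_closedBall (0 : EuclideanSpace ℝ (Fin m)) 1)
  isCompact_iff_compactSpace.mpr e.symm.compactSpace

lemma contractibleSpace_of_homeomorph_closedBall {m : ℕ} {C : Set X}
    (e : C ≃ₜ Metric.closedBall (0 : EuclideanSpace ℝ (Fin m)) 1) : ContractibleSpace C :=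
  have := (convex_closedBall (0 : EuclideanSpace ℝ (Fin m)) 1).contractibleSpace
    ⟨0, Metric.mem_closedBall_self zero_le_one⟩
  e.contractibleSpace

lemma IsCellularIn.exists_contractible_subset [T2Space X] {m : ℕ} {K U : Set X}
    (hK : IsCellularIn X m K) (hU : IsOpen U) (hKU : K ⊆ U) :
    ∃ C : Set X, K ⊆ C ∧ C ⊆ U ∧ ContractibleSpace C := by
  obtain ⟨B, hcell, hnest, rfl⟩ := hK
  have hanti : Antitone B :=
    antitone_nat_of_succ_le fun i => (hnest i).trans interior_subset
  obtain ⟨j, hj⟩ := exists_subset_nhds_of_isCompact hanti.directed_ge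
    (fun i => isCompact_of_homeomorph_closedBall (hcell i).some)
    (fun x hx => hU.mem_nhds (hKU hx))
  exact ⟨B j, Set.iInter_subset B j, hj,
    contractibleSpace_of_homeomorph_closedBall (hcell j).some⟩

lemma isCellLike_of_forall_exists_contractible {K : Set X}
    (h : ∀ U : Set X, IsOpen U → K ⊆ U → ∃ C : Set X, K ⊆ C ∧ C ⊆ U ∧ ContractibleSpace C) :
    IsCellLike K := by
  intro U hU hKU
  obtain ⟨C, hKC, hCU, hC⟩ := h U hU hKU
  exact nullhomotopic_comp_of_contractibleSpace
    ⟨Set.inclusion hKC, continuous_inclusion hKC⟩ ⟨Set.inclusion hCU, continuous_inclusion hCU⟩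

lemma IsCellularIn.isCellLike [T2Space X] {m : ℕ} {K : Set X} (hK : IsCellularIn X m K) :
    IsCellLike K :=
  isCellLike_of_forall_exists_contractible fun _ hU hKU =>
    hK.exists_contractible_subset hU hKU

lemma IsCellLike.of_prod_singleton {Y : Type*} [TopologicalSpace Y] {K : Set X} {y : Y}
    (hK : IsCellLike (K ×ˢ ({y} : Set Y))) : IsCellLike K := by
  intro U hU hKU
  have hKyU : K ×ˢ {y} ⊆ U ×ˢ (Set.univ : Set Y) := Set.prod_mono hKU (Set.subset_univ _)
  let slice : C(K, ↥(K ×ˢ ({y} : Set Y))) :=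
    ⟨fun x => ⟨(x, y), x.2, rfl⟩, by fun_prop⟩
  let project : C(↥(U ×ˢ (Set.univ : Set Y)), U) :=
    ⟨fun p => ⟨p.1.1, p.2.1⟩, by fun_prop⟩
  have hnull : Nullhomotopic _ := hK _ (hU.prod isOpen_univ) hKyU
  exact (hnull.comp_left slice).comp_right project

end

theorem stmt_16_general (n : ℕ) (K : Set (EuclideanSpace ℝ (Fin n)))
    (hcell : IsCellularIn (EuclideanSpace ℝ (Fin n) × ℝ) (n + 1) (K ×ˢ ({0} : Set ℝ))) :
    IsCellLike K :=
  hcell.isCellLike.of_prod_singleton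

/-- If `K × {0}` is cellular in `ℝⁿ⁺¹ = ℝⁿ × ℝ`, then `K` is cell-like in `ℝⁿ`. -/
theorem stmt_16 (n : ℕ) (hn : 1 ≤ n) (K : Set (EuclideanSpace ℝ (Fin n)))
    (hKc : IsCompact K)
    (hcell : IsCellularIn (EuclideanSpace ℝ (Fin n) × ℝ) (n + 1) (K ×ˢ ({0} : Set ℝ))) :
    IsCellLike K :=
  stmt_16_general n K hcell
end
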